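/- arXiv:2402.08821 — 8 statements merged into one kernel-verified Lean document; each statement's English description precedes it below -/
import Mathlib

section
/- One-step descent for D-SGT: let x_1,…,x_n ∈ ℝ^d with average x̄, and let v_1,…,v_n be independent random vectors in ℝ^d with E[v_i] = ∇f_i(x_i) and E‖v_i − ∇f_i(x_i)‖² ≤ σ². Set v̄ := (1/n)∑_i v_i and x̄⁺ := x̄ − η·v̄ for η ≥ 0. Then E[f(x̄⁺)] − f(x̄) ≤ −(3η/4)·‖∇f(x̄)‖² + 2η²·L·σ²/n + (η + 2η²L)·(L²/n)·∑_{i=1}^n ‖x_i − x̄‖² + η²·L·G². -/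
/-!
Write `F = (1/n)∑ fᵢ`, `b = ∇F(x̄)` and `h = E v̄ = (1/n)∑ ∇fᵢ(xᵢ)`. Since `∇F` is `L`-Lipschitz,
`F(a + u) ≤ F a + ⟪∇F a, u⟫ + (L/2)‖u‖²`; taking `u = -η v̄` and expectations gives
`E F(x̄⁺) ≤ F x̄ - η⟪b, h⟫ + (Lη²/2) E‖v̄‖²`. Independence kills the cross terms of `v̄ - h`, so
`E‖v̄‖² = ‖h‖² + E‖v̄ - h‖² ≤ ‖h‖² + σ²/n`. The consensus error enters only through
`‖b - h‖² ≤ (L²/n)∑‖xᵢ - x̄‖²`, and the bounds `⟪b, h⟫ ≥ (3/4)‖b‖² - ‖b - h‖²`,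
`‖h‖² ≤ 2‖b - h‖² + 2‖b‖²` and `‖b‖ ≤ G` finish the estimate.
-/

open MeasureTheory ProbabilityTheory Finset

theorem norm_inv_smul_sum_le {E : Type*} [SeminormedAddCommGroup E] [NormedSpace ℝ E] {n : ℕ}
    {u : Fin n → E} {c : Fin n → ℝ} (hu : ∀ i, ‖u i‖ ≤ c i) :
    ‖(n : ℝ)⁻¹ • ∑ i, u i‖ ≤ (∑ i, c i) / n := by
  rw [norm_smul, norm_inv, Real.norm_natCast, inv_mul_eq_div]
  gcongr
  exact (norm_sum_le _ _).trans (sum_le_sum fun i _ => hu i)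

theorem norm_inv_smul_sum_sq_le {E : Type*} [SeminormedAddCommGroup E] [NormedSpace ℝ E] {n : ℕ}
    (u : Fin n → E) : ‖(n : ℝ)⁻¹ • ∑ i, u i‖ ^ 2 ≤ (n : ℝ)⁻¹ * ∑ i, ‖u i‖ ^ 2 := by
  calc ‖(n : ℝ)⁻¹ • ∑ i, u i‖ ^ 2 ≤ ((∑ i, ‖u i‖) / n) ^ 2 := by
        gcongr
        exact norm_inv_smul_sum_le fun i => le_rfl
    _ ≤ n * (∑ i, ‖u i‖ ^ 2) / n ^ 2 := by
        rw [div_pow]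
        gcongr
        simpa using sq_sum_le_card_mul_sum_sq (s := univ) (f := fun i => ‖u i‖)
    _ = (n : ℝ)⁻¹ * ∑ i, ‖u i‖ ^ 2 := by
        rcases eq_or_ne (n : ℝ) 0 with hn | hn
        · simp [hn]
        · field_simp

theorem norm_inv_smul_sum_sub_sq_le {E E' : Type*} [SeminormedAddCommGroup E]
    [SeminormedAddCommGroup E'] [NormedSpace ℝ E'] {n : ℕ} {g : Fin n → E → E'} {L : ℝ}
    (hg : ∀ i x y, ‖g i x - g i y‖ ≤ L * ‖x - y‖) (x : Fin n → E) (y : E) :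
    ‖(n : ℝ)⁻¹ • ∑ i, g i y - (n : ℝ)⁻¹ • ∑ i, g i (x i)‖ ^ 2
      ≤ L ^ 2 / n * ∑ i, ‖x i - y‖ ^ 2 := by
  rw [← smul_sub, ← sum_sub_distrib, div_eq_inv_mul, mul_assoc, mul_sum]
  refine (norm_inv_smul_sum_sq_le _).trans ?_
  gcongr with i
  rw [norm_sub_rev (x i), ← mul_pow]
  gcongr
  exact hg i y (x i)

theorem three_div_four_mul_norm_sq_sub_le_inner {E : Type*} [NormedAddCommGroup E]
    [InnerProductSpace ℝ E] (b h : E) : 3 / 4 * ‖b‖ ^ 2 - ‖b - h‖ ^ 2 ≤ inner ℝ b h := by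
  have hsq := sq_nonneg (‖b‖ / 2 - ‖b - h‖)
  have hcs := real_inner_le_norm b (b - h)
  rw [inner_sub_right, real_inner_self_eq_norm_sq] at hcs
  nlinarith

theorem norm_sq_le_two_mul_norm_sub_sq_add {E : Type*} [SeminormedAddCommGroup E] (b h : E) :
    ‖h‖ ^ 2 ≤ 2 * (‖b - h‖ ^ 2 + ‖b‖ ^ 2) :=
  calc ‖h‖ ^ 2 ≤ (‖b - h‖ + ‖b‖) ^ 2 := by
        gcongr
        simpa using norm_sub_le (b - h) b
    _ ≤ 2 * (‖b - h‖ ^ 2 + ‖b‖ ^ 2) := add_sq_le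

theorem neg_mul_inner_add_le_of_norm_sub_sq_le {E : Type*} [NormedAddCommGroup E]
    [InnerProductSpace ℝ E] {b h : E} {η L q s S G : ℝ} (hη : 0 ≤ η) (hL : 0 ≤ L) (hs : 0 ≤ s)
    (hq : q ≤ ‖h‖ ^ 2 + s) (hS : ‖b - h‖ ^ 2 ≤ S) (hG : ‖b‖ ≤ G) :
    -η * inner ℝ b h + L / 2 * η ^ 2 * q
      ≤ -(3 * η / 4) * ‖b‖ ^ 2 + 2 * η ^ 2 * L * s + (η + 2 * η ^ 2 * L) * S
        + η ^ 2 * L * G ^ 2 := by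
  have hinner := mul_le_mul_of_nonneg_left (three_div_four_mul_norm_sq_sub_le_inner b h) hη
  have hquad := mul_le_mul_of_nonneg_left
    (hq.trans (add_le_add_left (norm_sq_le_two_mul_norm_sub_sq_add b h) s))
    (by positivity : 0 ≤ L / 2 * η ^ 2)
  calc -η * inner ℝ b h + L / 2 * η ^ 2 * q
      ≤ η * (‖b - h‖ ^ 2 - 3 / 4 * ‖b‖ ^ 2)
          + L / 2 * η ^ 2 * (2 * (‖b - h‖ ^ 2 + ‖b‖ ^ 2) + s) := by
        linarith
    _ ≤ η * (S - 3 / 4 * ‖b‖ ^ 2) + L / 2 * η ^ 2 * (2 * (S + G ^ 2) + s) := by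
        gcongr
    _ ≤ _ := by
        have : 0 ≤ L * η ^ 2 * S := mul_nonneg (by positivity) ((sq_nonneg _).trans hS)
        have : 0 ≤ L * η ^ 2 * s := by positivity
        linarith

theorem norm_sub_sub_fderiv_le_of_lipschitz {E F : Type*} [NormedAddCommGroup E] [NormedSpace ℝ E]
    [NormedAddCommGroup F] [NormedSpace ℝ F] {f : E → F} {f' : E → E →L[ℝ] F} {L : ℝ}
    (hf : ∀ x, HasFDerivAt f (f' x) x) (hf' : ∀ x y, ‖f' x - f' y‖ ≤ L * ‖x - y‖) (a u : E) :
    ‖f (a + u) - f a - f' a u‖ ≤ L / 2 * ‖u‖ ^ 2 := by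
  set g : ℝ → F := fun t => f (a + t • u) - f a - t • f' a u
  have hg (t : ℝ) : HasDerivAt g (f' (a + t • u) u - f' a u) t := by
    have hline : HasDerivAt (fun t : ℝ => a + t • u) u t := by
      simpa using ((hasDerivAt_id t).smul_const u).const_add a
    exact (((hf _).comp_hasDerivAt t hline).sub_const (f a)).sub
      (by simpa using (hasDerivAt_id t).smul_const (f' a u))
  have hB (t : ℝ) : HasDerivAt (fun t => L / 2 * t ^ 2 * ‖u‖ ^ 2) (L * t * ‖u‖ ^ 2) t := by
    refine (((hasDerivAt_pow 2 t).const_mul (L / 2)).mul_const (‖u‖ ^ 2)).congr_deriv ?_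
    push_cast; ring
  have hg' (t : ℝ) (ht : t ∈ Set.Ico (0 : ℝ) 1) : ‖f' (a + t • u) u - f' a u‖ ≤ L * t * ‖u‖ ^ 2 :=
    calc ‖f' (a + t • u) u - f' a u‖ = ‖(f' (a + t • u) - f' a) u‖ := rfl
      _ ≤ ‖f' (a + t • u) - f' a‖ * ‖u‖ := ContinuousLinearMap.le_opNorm _ _
      _ ≤ L * ‖t • u‖ * ‖u‖ := by gcongr; simpa using hf' (a + t • u) a
      _ = L * t * ‖u‖ ^ 2 := by rw [norm_smul, Real.norm_of_nonneg ht.1]; ring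
  simpa [g] using image_norm_le_of_norm_deriv_right_le_deriv_boundary
    (fun t _ => (hg t).continuousAt.continuousWithinAt) (fun t _ => (hg t).hasDerivWithinAt)
    (by simp [g]) hB hg' (Set.right_mem_Icc.2 zero_le_one)

section Gradient

variable {E : Type*} [NormedAddCommGroup E] [InnerProductSpace ℝ E] [CompleteSpace E]
  {F : E → ℝ} {L : ℝ}

theorem abs_sub_sub_inner_gradient_le_of_lipschitz (hF : Differentiable ℝ F)
    (hL : ∀ x y, ‖gradient F x - gradient F y‖ ≤ L * ‖x - y‖) (a u : E) :
    |F (a + u) - F a - inner ℝ (gradient F a) u| ≤ L / 2 * ‖u‖ ^ 2 := by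
  refine norm_sub_sub_fderiv_le_of_lipschitz
    (fun x => hasGradientAt_iff_hasFDerivAt.1 (hF x).hasGradientAt) (fun x y => ?_) a u
  rw [← map_sub, LinearIsometryEquiv.norm_map]
  exact hL x y

theorem integral_sub_smul_le_of_lipschitz_gradient {Ω : Type*} [MeasurableSpace Ω]
    {μ : Measure Ω} [IsProbabilityMeasure μ] (hF : Differentiable ℝ F)
    (hL : ∀ x y, ‖gradient F x - gradient F y‖ ≤ L * ‖x - y‖) {V : Ω → E} (hV : MemLp V 2 μ)
    (a : E) (η : ℝ) :
    ∫ ω, F (a - η • V ω) ∂μ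
      ≤ F a - η * inner ℝ (gradient F a) (∫ ω, V ω ∂μ) + L / 2 * η ^ 2 * ∫ ω, ‖V ω‖ ^ 2 ∂μ := by
  have hpt (ω : Ω) : |F (a - η • V ω) - (F a - η * inner ℝ (gradient F a) (V ω))|
      ≤ L / 2 * η ^ 2 * ‖V ω‖ ^ 2 := by
    convert abs_sub_sub_inner_gradient_le_of_lipschitz hF hL a (-(η • V ω)) using 1
    · rw [← sub_eq_add_neg, inner_neg_right, real_inner_smul_right, sub_neg_eq_add, sub_add]
    · rw [norm_neg, norm_smul, mul_pow, Real.norm_eq_abs, sq_abs, mul_assoc]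
  have hV1 : Integrable V μ := hV.integrable one_le_two
  have hlin : Integrable (fun ω => F a - η * inner ℝ (gradient F a) (V ω)) μ :=
    (integrable_const _).sub ((hV1.const_inner _).const_mul η)
  have hquad : Integrable (fun ω => L / 2 * η ^ 2 * ‖V ω‖ ^ 2) μ :=
    (hV.integrable_norm_pow two_ne_zero).const_mul _
  have hrem :
      Integrable (fun ω => F (a - η • V ω) - (F a - η * inner ℝ (gradient F a) (V ω))) μ :=
    hquad.mono' ((hF.continuous.comp_aestronglyMeasurable
      (aestronglyMeasurable_const.sub (hV1.1.const_smul η))).sub hlin.1) (ae_of_all _ hpt)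
  calc ∫ ω, F (a - η • V ω) ∂μ
      ≤ ∫ ω, (F a - η * inner ℝ (gradient F a) (V ω) + L / 2 * η ^ 2 * ‖V ω‖ ^ 2) ∂μ :=
        integral_mono ((hrem.add hlin).congr (ae_of_all _ fun ω => sub_add_cancel _ _))
          (hlin.add hquad) fun ω => by linarith [(abs_le.1 (hpt ω)).2]
    _ = _ := by
        rw [integral_add hlin hquad, integral_sub (integrable_const _)
          ((hV1.const_inner _).const_mul η), integral_const, integral_const_mul,
          integral_const_mul, integral_inner hV1]
        simp

theorem hasGradientAt_sum_div {ι : Type*} [Fintype ι] {f : ι → E → ℝ} {z : E}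
    (hf : ∀ i, DifferentiableAt ℝ (f i) z) (c : ℝ) :
    HasGradientAt (fun y => (∑ i, f i y) / c) (c⁻¹ • ∑ i, gradient (f i) z) z := by
  rw [hasGradientAt_iff_hasFDerivAt, map_smul, map_sum]
  simp_rw [div_eq_mul_inv]
  exact (HasFDerivAt.fun_sum fun i _ =>
    hasGradientAt_iff_hasFDerivAt.1 (hf i).hasGradientAt).mul_const c⁻¹

theorem norm_gradient_sum_div_sub_le {n : ℕ} {f : Fin n → E → ℝ}
    (hf : ∀ i, Differentiable ℝ (f i)) (hL : 0 ≤ L)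
    (hsmooth : ∀ i x y, ‖gradient (f i) x - gradient (f i) y‖ ≤ L * ‖x - y‖) (x y : E) :
    ‖gradient (fun z => (∑ i, f i z) / n) x - gradient (fun z => (∑ i, f i z) / n) y‖
      ≤ L * ‖x - y‖ := by
  rw [(hasGradientAt_sum_div (hf · x) n).gradient, (hasGradientAt_sum_div (hf · y) n).gradient,
    ← smul_sub, ← sum_sub_distrib]
  refine (norm_inv_smul_sum_le fun i => hsmooth i x y).trans ?_
  rw [sum_const, card_univ, Fintype.card_fin, nsmul_eq_mul]
  exact div_le_of_le_mul₀ (Nat.cast_nonneg n) (by positivity) (mul_comm _ _).le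

end Gradient

section Probability

variable {Ω E : Type*} [MeasurableSpace Ω] {μ : Measure Ω} [NormedAddCommGroup E]
  [InnerProductSpace ℝ E] [CompleteSpace E]

theorem integral_norm_sq_eq_norm_integral_sq_add [IsProbabilityMeasure μ] {V : Ω → E}
    (hV : MemLp V 2 μ) :
    ∫ ω, ‖V ω‖ ^ 2 ∂μ = ‖∫ ω, V ω ∂μ‖ ^ 2 + ∫ ω, ‖V ω - ∫ ω, V ω ∂μ‖ ^ 2 ∂μ := by
  set m := ∫ ω, V ω ∂μ
  have hW : MemLp (fun ω => V ω - m) 2 μ := hV.sub (memLp_const m)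
  have hW1 : Integrable (fun ω => V ω - m) μ := hW.integrable one_le_two
  have hW2 : Integrable (fun ω => ‖V ω - m‖ ^ 2) μ := hW.integrable_norm_pow two_ne_zero
  have hcross : Integrable (fun ω => 2 * inner ℝ m (V ω - m)) μ := (hW1.const_inner m).const_mul 2
  have hmean : ∫ ω, (V ω - m) ∂μ = 0 := by
    rw [integral_sub (hV.integrable one_le_two) (integrable_const m), integral_const]
    simp [m]
  calc ∫ ω, ‖V ω‖ ^ 2 ∂μ = ∫ ω, (‖V ω - m‖ ^ 2 + 2 * inner ℝ m (V ω - m) + ‖m‖ ^ 2) ∂μ := by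
        refine integral_congr_ae (ae_of_all _ fun ω => ?_)
        have := norm_add_sq_real (V ω - m) m
        rw [sub_add_cancel] at this
        linarith [real_inner_comm m (V ω - m)]
    _ = ‖m‖ ^ 2 + ∫ ω, ‖V ω - m‖ ^ 2 ∂μ := by
        rw [integral_add (f := fun ω => ‖V ω - m‖ ^ 2 + 2 * inner ℝ m (V ω - m))
          (hW2.add hcross) (integrable_const _), integral_add hW2 hcross, integral_const_mul,
          integral_inner hW1, hmean]
        simp only [inner_zero_right, mul_zero, add_zero, integral_const, probReal_univ, one_smul]
        ring

theorem integral_norm_sum_sq_of_indepFun {ι : Type*} [Fintype ι] [IsFiniteMeasure μ]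
    [MeasurableSpace E] [BorelSpace E] {w : ι → Ω → E}
    (hindep : Pairwise fun i j => IndepFun (w i) (w j) μ) (hw : ∀ i, MemLp (w i) 2 μ)
    (hmean : ∀ i, ∫ ω, w i ω ∂μ = 0) :
    ∫ ω, ‖∑ i, w i ω‖ ^ 2 ∂μ = ∑ i, ∫ ω, ‖w i ω‖ ^ 2 ∂μ := by
  have hint (i j : ι) : Integrable (fun ω => inner ℝ (w i ω) (w j ω)) μ := by
    rcases eq_or_ne i j with rfl | hij
    · simpa only [real_inner_self_eq_norm_sq] using (hw i).integrable_norm_pow two_ne_zero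
    · exact (hindep hij).integrable_bilin ((hw i).integrable one_le_two)
        ((hw j).integrable one_le_two) (innerSL ℝ)
  have hcross (i j : ι) (hij : i ≠ j) : ∫ ω, inner ℝ (w i ω) (w j ω) ∂μ = 0 := by
    have := (hindep hij).integral_bilin ((hw i).integrable one_le_two)
      ((hw j).integrable one_le_two) (innerSL ℝ)
    rwa [hmean, map_zero, zero_apply] at this
  calc ∫ ω, ‖∑ i, w i ω‖ ^ 2 ∂μ = ∫ ω, ∑ i, ∑ j, inner ℝ (w i ω) (w j ω) ∂μ := by
        simp_rw [← real_inner_self_eq_norm_sq, sum_inner, inner_sum]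
    _ = ∑ i, ∑ j, ∫ ω, inner ℝ (w i ω) (w j ω) ∂μ := by
        rw [integral_finsetSum _ fun i _ => integrable_finsetSum _ fun j _ => hint i j]
        simp_rw [integral_finsetSum _ fun j _ => hint _ j]
    _ = ∑ i, ∫ ω, ‖w i ω‖ ^ 2 ∂μ := by
        refine sum_congr rfl fun i _ => ?_
        rw [sum_eq_single i (fun j _ hji => hcross i j hji.symm) (by simp)]
        simp_rw [real_inner_self_eq_norm_sq]

theorem integral_norm_inv_smul_sum_sq_le [IsFiniteMeasure μ] [MeasurableSpace E] [BorelSpace E]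
    {n : ℕ} {w : Fin n → Ω → E} (hindep : Pairwise fun i j => IndepFun (w i) (w j) μ)
    (hw : ∀ i, MemLp (w i) 2 μ) (hmean : ∀ i, ∫ ω, w i ω ∂μ = 0) {s : ℝ}
    (hvar : ∀ i, ∫ ω, ‖w i ω‖ ^ 2 ∂μ ≤ s) :
    ∫ ω, ‖(n : ℝ)⁻¹ • ∑ i, w i ω‖ ^ 2 ∂μ ≤ s / n :=
  calc ∫ ω, ‖(n : ℝ)⁻¹ • ∑ i, w i ω‖ ^ 2 ∂μ = (n : ℝ)⁻¹ ^ 2 * ∫ ω, ‖∑ i, w i ω‖ ^ 2 ∂μ := by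
        simp_rw [norm_smul, mul_pow, norm_inv, Real.norm_natCast]
        exact integral_const_mul _ _
    _ = (n : ℝ)⁻¹ ^ 2 * ∑ i, ∫ ω, ‖w i ω‖ ^ 2 ∂μ := by
        rw [integral_norm_sum_sq_of_indepFun hindep hw hmean]
    _ ≤ (n : ℝ)⁻¹ ^ 2 * ∑ _i : Fin n, s := by gcongr with i; exact hvar i
    _ = s / n := by
        rw [sum_const, card_univ, Fintype.card_fin, nsmul_eq_mul]
        rcases eq_or_ne (n : ℝ) 0 with hn | hn
        · simp [hn]
        · field_simp

theorem integral_norm_inv_smul_sum_sub_sq_le [IsProbabilityMeasure μ] [MeasurableSpace E]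
    [BorelSpace E] {n : ℕ} {v : Fin n → Ω → E} {m : Fin n → E} (hindep : iIndepFun v μ)
    (hv : ∀ i, MemLp (v i) 2 μ) (hmean : ∀ i, ∫ ω, v i ω ∂μ = m i) {s : ℝ}
    (hvar : ∀ i, ∫ ω, ‖v i ω - m i‖ ^ 2 ∂μ ≤ s) :
    ∫ ω, ‖(n : ℝ)⁻¹ • ∑ i, v i ω - (n : ℝ)⁻¹ • ∑ i, m i‖ ^ 2 ∂μ ≤ s / n := by
  simp_rw [← smul_sub, ← sum_sub_distrib]
  refine integral_norm_inv_smul_sum_sq_le (w := fun i ω => v i ω - m i) (fun i j hij => ?_)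
    (fun i => (hv i).sub (memLp_const _)) (fun i => ?_) hvar
  · exact (hindep.comp (fun i y => y - m i) fun i => measurable_id.sub_const _).indepFun hij
  · rw [integral_sub ((hv i).integrable one_le_two) (integrable_const _), hmean, integral_const]
    simp

end Probability

theorem dsgt_one_step_descent_general
    (d n : ℕ)
    (Ω : Type) [MeasurableSpace Ω] (μ : Measure Ω) [IsProbabilityMeasure μ]
    (f : Fin n → EuclideanSpace ℝ (Fin d) → ℝ) (L σ G : ℝ) (Gi : Fin n → ℝ)
    (hL : 0 ≤ L)
    (hdiff : ∀ i x, DifferentiableAt ℝ (f i) x)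
    (hsmooth : ∀ i x y, ‖gradient (f i) x - gradient (f i) y‖ ≤ L * ‖x - y‖)
    (hGi : ∀ i x, ‖gradient (f i) x‖ ≤ Gi i)
    (hG : G = (∑ i, Gi i) / n)
    (x : Fin n → EuclideanSpace ℝ (Fin d)) (v : Fin n → Ω → EuclideanSpace ℝ (Fin d))
    (hindep : iIndepFun v μ)
    (hint : ∀ i, Integrable (v i) μ)
    (hint2 : ∀ i, Integrable (fun ω => ‖v i ω‖ ^ 2) μ)
    (hmean : ∀ i, ∫ ω, v i ω ∂μ = gradient (f i) (x i))
    (hvar : ∀ i, ∫ ω, ‖v i ω - gradient (f i) (x i)‖ ^ 2 ∂μ ≤ σ ^ 2)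
    (η : ℝ) (hη : 0 ≤ η) :
    (∫ ω, (∑ i, f i ((n : ℝ)⁻¹ • (∑ j, x j) - η • ((n : ℝ)⁻¹ • ∑ j, v j ω))) / n ∂μ)
        - (∑ i, f i ((n : ℝ)⁻¹ • ∑ j, x j)) / n
      ≤ -(3 * η / 4) *
            ‖gradient (fun y => (∑ i, f i y) / n) ((n : ℝ)⁻¹ • ∑ j, x j)‖ ^ 2
        + 2 * η ^ 2 * L * σ ^ 2 / n
        + (η + 2 * η ^ 2 * L) * (L ^ 2 / n) * ∑ i, ‖x i - (n : ℝ)⁻¹ • ∑ j, x j‖ ^ 2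
        + η ^ 2 * L * G ^ 2 := by
  set xbar := (n : ℝ)⁻¹ • ∑ j, x j
  set F : EuclideanSpace ℝ (Fin d) → ℝ := fun y => (∑ i, f i y) / n
  set V : Ω → EuclideanSpace ℝ (Fin d) := fun ω => (n : ℝ)⁻¹ • ∑ j, v j ω
  set h := (n : ℝ)⁻¹ • ∑ i, gradient (f i) (x i)
  have hgradF : gradient F xbar = (n : ℝ)⁻¹ • ∑ i, gradient (f i) xbar :=
    (hasGradientAt_sum_div (hdiff · xbar) n).gradient
  have hvL2 (i) : MemLp (v i) 2 μ := (memLp_two_iff_integrable_sq_norm (hint i).1).2 (hint2 i)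
  have hVL2 : MemLp V 2 μ := (memLp_finsetSum univ fun i _ => hvL2 i).const_smul (n : ℝ)⁻¹
  have hVmean : ∫ ω, V ω ∂μ = h := by
    rw [integral_smul, integral_finsetSum _ fun i _ => hint i]
    simp_rw [hmean, h]
  have hVsq : ∫ ω, ‖V ω‖ ^ 2 ∂μ ≤ ‖h‖ ^ 2 + σ ^ 2 / n := by
    rw [integral_norm_sq_eq_norm_integral_sq_add hVL2, hVmean]
    gcongr
    exact integral_norm_inv_smul_sum_sub_sq_le hindep hvL2 hmean hvar
  have hdesc := integral_sub_smul_le_of_lipschitz_gradient (F := F)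
    (fun y => (hasGradientAt_sum_div (hdiff · y) n).differentiableAt)
    (norm_gradient_sum_div_sub_le hdiff hL hsmooth) hVL2 xbar η
  have hbG : ‖gradient F xbar‖ ≤ G := by
    rw [hgradF, hG]
    exact norm_inv_smul_sum_le fun i => hGi i xbar
  have hkey := neg_mul_inner_add_le_of_norm_sub_sq_le hη hL (by positivity) hVsq
    (hgradF ▸ norm_inv_smul_sum_sub_sq_le hsmooth x xbar) hbG
  rw [hVmean] at hdesc
  calc ∫ ω, F (xbar - η • V ω) ∂μ - F xbar
      ≤ -(3 * η / 4) * ‖gradient F xbar‖ ^ 2 + 2 * η ^ 2 * L * (σ ^ 2 / n)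
        + (η + 2 * η ^ 2 * L) * (L ^ 2 / n * ∑ i, ‖x i - xbar‖ ^ 2) + η ^ 2 * L * G ^ 2 := by
        linarith
    _ = _ := by ring

/-- **One-step descent for D-SGT.** With deterministic points `x_i`, independent
unbiased oracles `v_i` with variance at most `σ²`, `v̄ := (1/n)∑ v_i` and
`x̄⁺ := x̄ − η v̄`, one has
`E[f(x̄⁺)] − f(x̄) ≤ −(3η/4)‖∇f(x̄)‖² + 2η²Lσ²/n + (η + 2η²L)(L²/n)∑‖x_i − x̄‖² + η²LG²`. -/
theorem dsgt_one_step_descent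
    (d n : ℕ) (hn : 0 < n)
    (Ω : Type) [MeasurableSpace Ω] (μ : Measure Ω) [IsProbabilityMeasure μ]
    (f : Fin n → EuclideanSpace ℝ (Fin d) → ℝ) (L σ G : ℝ) (Gi : Fin n → ℝ)
    (hL : 0 ≤ L) (hσ : 0 ≤ σ)
    (hdiff : ∀ i x, DifferentiableAt ℝ (f i) x)
    (hsmooth : ∀ i x y, ‖gradient (f i) x - gradient (f i) y‖ ≤ L * ‖x - y‖)
    (hGi : ∀ i x, ‖gradient (f i) x‖ ≤ Gi i)
    (hG : G = (∑ i, Gi i) / n)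
    (x : Fin n → EuclideanSpace ℝ (Fin d)) (v : Fin n → Ω → EuclideanSpace ℝ (Fin d))
    (hmeas : ∀ i, Measurable (v i))
    (hindep : iIndepFun v μ)
    (hint : ∀ i, Integrable (v i) μ)
    (hint2 : ∀ i, Integrable (fun ω => ‖v i ω‖ ^ 2) μ)
    (hmean : ∀ i, ∫ ω, v i ω ∂μ = gradient (f i) (x i))
    (hvar : ∀ i, ∫ ω, ‖v i ω - gradient (f i) (x i)‖ ^ 2 ∂μ ≤ σ ^ 2)
    (η : ℝ) (hη : 0 ≤ η) :
    (∫ ω, (∑ i, f i ((n : ℝ)⁻¹ • (∑ j, x j) - η • ((n : ℝ)⁻¹ • ∑ j, v j ω))) / n ∂μ)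
        - (∑ i, f i ((n : ℝ)⁻¹ • ∑ j, x j)) / n
      ≤ -(3 * η / 4) *
            ‖gradient (fun y => (∑ i, f i y) / n) ((n : ℝ)⁻¹ • ∑ j, x j)‖ ^ 2
        + 2 * η ^ 2 * L * σ ^ 2 / n
        + (η + 2 * η ^ 2 * L) * (L ^ 2 / n) * ∑ i, ‖x i - (n : ℝ)⁻¹ • ∑ j, x j‖ ^ 2
        + η ^ 2 * L * G ^ 2 :=
  dsgt_one_step_descent_general d n Ω μ f L σ G Gi hL hdiff hsmooth hGi hG x v hindep hint hint2
    hmean hvar η hη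
end

section
/- One-step consensus contraction for D-SGT: let X, U ∈ ℝ^{d×n}, let W ∈ ℝ^{n×n} be symmetric with W𝟙 = 𝟙 and ‖W − (1/n)𝟙𝟙ᵀ‖₂ ≤ ρ < 1, and let η ≥ 0. Then (i) for X⁺ := (X − ηU)W one has ‖X⁺ − X̄⁺‖² ≤ ((1+ρ)/2)·‖X − X̄‖² + η²·((1+ρ²)/(1−ρ²))·‖U − Ū‖²; and (ii) for any D ∈ ℝ^{d×n} and U⁺ := UW + D one has ‖U⁺ − Ū⁺‖² ≤ ((1+ρ)/2)·‖U − Ū‖² + ((1+ρ²)/(1−ρ²))·‖D‖². -/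
/-!
Both updates have the form `Z⁺ - Z̄⁺ = P + Q` with `P = WZ - Z̄`. As `W` is doubly stochastic,
`P` is `W` applied to the rows of the centred matrix `Z - Z̄`, which have zero mean, so the
spectral bound gives `‖P‖ ≤ ρ ‖Z - Z̄‖`. The remainder is `Q = -η (WU - Ū)` in (i), with
`‖Q‖ ≤ |η| ‖U - Ū‖`, and `Q = D - D̄` in (ii), with `‖Q‖ ≤ ‖D‖`. The triangle inequality and
the scalar bound `(ρa + b)² ≤ ((1+ρ)/2) a² + ((1+ρ²)/(1-ρ²)) b²` for `0 ≤ ρ < 1` conclude.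
-/

open Finset Matrix

theorem mul_add_sq_le_of_lt_one {ρ : ℝ} (hρ0 : 0 ≤ ρ) (hρ1 : ρ < 1) (a b : ℝ) :
    (ρ * a + b) ^ 2 ≤ (1 + ρ) / 2 * a ^ 2 + (1 + ρ ^ 2) / (1 - ρ ^ 2) * b ^ 2 := by
  have hρ2 : 0 < 1 - ρ ^ 2 := by nlinarith
  -- `2 (1 - ρ²)` times the gap is `(2ρb - (1 - ρ²)a)² + ρ(1 - ρ)(1 - ρ²)a²`
  rw [div_mul_eq_mul_div, div_mul_eq_mul_div, div_add_div _ _ two_ne_zero hρ2.ne',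
    le_div_iff₀ (by positivity)]
  nlinarith [sq_nonneg (2 * ρ * b - (1 - ρ ^ 2) * a),
    mul_nonneg (mul_nonneg (mul_nonneg hρ0 (sub_nonneg.2 hρ1.le)) hρ2.le) (sq_nonneg a)]

theorem norm_add_sq_le_of_sq_le {E : Type*} [SeminormedAddCommGroup E] {ρ A B : ℝ}
    (hρ0 : 0 ≤ ρ) (hρ1 : ρ < 1) (hA : 0 ≤ A) {p q : E}
    (hp : ‖p‖ ^ 2 ≤ ρ ^ 2 * A) (hq : ‖q‖ ^ 2 ≤ B) :
    ‖p + q‖ ^ 2 ≤ (1 + ρ) / 2 * A + (1 + ρ ^ 2) / (1 - ρ ^ 2) * B := by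
  have hp' : ‖p‖ ≤ ρ * √A := by
    rw [← Real.sqrt_sq hρ0, ← Real.sqrt_mul (sq_nonneg ρ)]
    exact Real.le_sqrt_of_sq_le hp
  have hq' : ‖q‖ ≤ √B := Real.le_sqrt_of_sq_le hq
  have hB : 0 ≤ B := (sq_nonneg _).trans hq
  calc ‖p + q‖ ^ 2 ≤ (ρ * √A + √B) ^ 2 :=
        pow_le_pow_left₀ (norm_nonneg _) ((norm_add_le p q).trans (add_le_add hp' hq')) 2
    _ ≤ (1 + ρ) / 2 * √A ^ 2 + (1 + ρ ^ 2) / (1 - ρ ^ 2) * √B ^ 2 :=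
        mul_add_sq_le_of_lt_one hρ0 hρ1 _ _
    _ = (1 + ρ) / 2 * A + (1 + ρ ^ 2) / (1 - ρ ^ 2) * B := by
        rw [Real.sq_sqrt hA, Real.sq_sqrt hB]

theorem sum_norm_add_sq_le_of_sum_le {ι E : Type*} [Fintype ι] [SeminormedAddCommGroup E]
    {ρ A B : ℝ} (hρ0 : 0 ≤ ρ) (hρ1 : ρ < 1) (hA : 0 ≤ A) {p q : ι → E}
    (hp : ∑ i, ‖p i‖ ^ 2 ≤ ρ ^ 2 * A) (hq : ∑ i, ‖q i‖ ^ 2 ≤ B) :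
    ∑ i, ‖p i + q i‖ ^ 2 ≤ (1 + ρ) / 2 * A + (1 + ρ ^ 2) / (1 - ρ ^ 2) * B := by
  simp only [← PiLp.norm_sq_eq_of_L2] at hp hq
  simpa only [PiLp.norm_sq_eq_of_L2, WithLp.ofLp_add, Pi.add_apply] using
    norm_add_sq_le_of_sq_le hρ0 hρ1 hA hp hq

/-- For symmetric `W` with `W𝟙 = 𝟙` this is the spectral bound `‖W - (1/n)𝟙𝟙ᵀ‖₂ ≤ ρ`. -/
def ContractsMeanZero {ι : Type*} [Fintype ι] (W : Matrix ι ι ℝ) (ρ : ℝ) : Prop :=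
  ∀ a : ι → ℝ, ∑ j, a j = 0 →
    ‖(WithLp.toLp 2 (W *ᵥ a) : EuclideanSpace ℝ ι)‖ ≤ ρ * ‖(WithLp.toLp 2 a : EuclideanSpace ℝ ι)‖

theorem sum_norm_sq_eq_sum_norm_sq_coord {ι κ : Type*} [Fintype ι] [Fintype κ]
    (V : ι → EuclideanSpace ℝ κ) :
    ∑ i, ‖V i‖ ^ 2 = ∑ k, ‖(WithLp.toLp 2 fun i => V i k : EuclideanSpace ℝ ι)‖ ^ 2 := by
  simp only [EuclideanSpace.real_norm_sq_eq]
  exact Finset.sum_comm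

theorem sum_norm_sum_smul_sq_le {ι κ : Type*} [Fintype ι] [Fintype κ]
    {W : Matrix ι ι ℝ} {ρ : ℝ} (hW : ContractsMeanZero W ρ)
    {V : ι → EuclideanSpace ℝ κ} (hV : ∑ j, V j = 0) :
    ∑ i, ‖∑ j, W i j • V j‖ ^ 2 ≤ ρ ^ 2 * ∑ i, ‖V i‖ ^ 2 := by
  rw [sum_norm_sq_eq_sum_norm_sq_coord (fun i => ∑ j, W i j • V j),
    sum_norm_sq_eq_sum_norm_sq_coord V, Finset.mul_sum]
  refine Finset.sum_le_sum fun k _ => ?_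
  have hVk : ∑ j, V j k = 0 := by
    simpa [WithLp.ofLp_sum] using congrArg (fun v : EuclideanSpace ℝ κ => v k) hV
  have h := hW _ hVk
  have hcol : (WithLp.toLp 2 fun i => (∑ j, W i j • V j) k : EuclideanSpace ℝ ι)
      = WithLp.toLp 2 (W *ᵥ fun j => V j k) := by
    ext i
    simp [WithLp.ofLp_sum, Matrix.mulVec, dotProduct]
  rw [hcol, ← mul_pow]
  exact pow_le_pow_left₀ (norm_nonneg _) h 2

theorem sum_sum_smul_eq_sum_of_sum_col_eq_one {ι E : Type*} [Fintype ι] [AddCommMonoid E]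
    [Module ℝ E] {W : Matrix ι ι ℝ} (hW : ∀ j, ∑ i, W i j = 1) (V : ι → E) :
    ∑ i, ∑ j, W i j • V j = ∑ j, V j := by
  rw [Finset.sum_comm]
  simp only [← Finset.sum_smul, hW, one_smul]

section Mean

variable {n : ℕ}

theorem sum_sub_mean_eq_zero {E : Type*} [AddCommGroup E] [Module ℝ E] (hn : 0 < n)
    (V : Fin n → E) : ∑ i, (V i - (n : ℝ)⁻¹ • ∑ j, V j) = 0 := by
  rw [Finset.sum_sub_distrib, Finset.sum_const, Finset.card_univ, Fintype.card_fin,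
    ← Nat.cast_smul_eq_nsmul ℝ, smul_smul, mul_inv_cancel₀ (by positivity), one_smul, sub_self]

theorem sum_norm_sub_mean_sq_le {E : Type*} [NormedAddCommGroup E] [InnerProductSpace ℝ E]
    (hn : 0 < n) (D : Fin n → E) :
    ∑ i, ‖D i - (n : ℝ)⁻¹ • ∑ j, D j‖ ^ 2 ≤ ∑ i, ‖D i‖ ^ 2 := by
  set m : E := (n : ℝ)⁻¹ • ∑ j, D j
  have hsum : ∑ j, D j = (n : ℝ) • m := by
    rw [smul_smul, mul_inv_cancel₀ (by positivity), one_smul]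
  have hvar : ∑ i, ‖D i - m‖ ^ 2 = ∑ i, ‖D i‖ ^ 2 - n * ‖m‖ ^ 2 := by
    simp only [norm_sub_sq_real, Finset.sum_add_distrib, Finset.sum_sub_distrib,
      ← Finset.mul_sum, ← sum_inner, hsum, real_inner_smul_left, real_inner_self_eq_norm_sq,
      Finset.sum_const, Finset.card_univ, Fintype.card_fin, nsmul_eq_mul]
    ring
  rw [hvar]
  exact sub_le_self _ (by positivity)

theorem sum_norm_mix_sub_mean_sq_le {κ : Type*} [Fintype κ] (hn : 0 < n)
    {W : Matrix (Fin n) (Fin n) ℝ} (hWrow : ∀ i, ∑ j, W i j = 1) {ρ : ℝ}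
    (hW : ContractsMeanZero W ρ)
    (V : Fin n → EuclideanSpace ℝ κ) :
    ∑ i, ‖(∑ j, W i j • V j) - (n : ℝ)⁻¹ • ∑ j, V j‖ ^ 2
      ≤ ρ ^ 2 * ∑ i, ‖V i - (n : ℝ)⁻¹ • ∑ j, V j‖ ^ 2 := by
  have hmix : ∀ i, (∑ j, W i j • V j) - (n : ℝ)⁻¹ • ∑ j, V j
      = ∑ j, W i j • (V j - (n : ℝ)⁻¹ • ∑ j, V j) := fun i => by
    simp only [smul_sub, Finset.sum_sub_distrib, ← Finset.sum_smul, hWrow, one_smul]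
  simp only [hmix]
  exact sum_norm_sum_smul_sq_le hW (sum_sub_mean_eq_zero hn V)

end Mean

theorem dsgt_one_step_consensus_general
    (d n : ℕ) (hn : 0 < n)
    (W : Matrix (Fin n) (Fin n) ℝ) (hWsymm : W.IsSymm)
    (hWrow : ∀ i, ∑ j, W i j = 1)
    (ρ : ℝ) (hρ1 : ρ < 1)
    (hspec : ∀ a : EuclideanSpace ℝ (Fin n),
      ‖(show EuclideanSpace ℝ (Fin n) from
          WithLp.toLp 2 (fun i => (∑ j, W i j * a j) - (∑ j, a j) / n))‖ ≤ ρ * ‖a‖)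
    (X U : Fin n → EuclideanSpace ℝ (Fin d)) (η : ℝ) :
    (∑ i, ‖(∑ j, W i j • (X j - η • U j))
          - (n : ℝ)⁻¹ • ∑ k, ∑ j, W k j • (X j - η • U j)‖ ^ 2
        ≤ ((1 + ρ) / 2) * ∑ i, ‖X i - (n : ℝ)⁻¹ • ∑ j, X j‖ ^ 2
          + η ^ 2 * ((1 + ρ ^ 2) / (1 - ρ ^ 2)) * ∑ i, ‖U i - (n : ℝ)⁻¹ • ∑ j, U j‖ ^ 2)
      ∧ ∀ D : Fin n → EuclideanSpace ℝ (Fin d),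
        ∑ i, ‖((∑ j, W i j • U j) + D i)
            - (n : ℝ)⁻¹ • ∑ k, ((∑ j, W k j • U j) + D k)‖ ^ 2
          ≤ ((1 + ρ) / 2) * ∑ i, ‖U i - (n : ℝ)⁻¹ • ∑ j, U j‖ ^ 2
            + ((1 + ρ ^ 2) / (1 - ρ ^ 2)) * ∑ i, ‖D i‖ ^ 2 := by
  have hρ0 : 0 ≤ ρ := by
    simpa using (norm_nonneg _).trans (hspec (EuclideanSpace.single ⟨0, hn⟩ 1))
  have hW : ContractsMeanZero W ρ := fun a ha => by
    have h := hspec (WithLp.toLp 2 a)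
    simp only [ha, zero_div, sub_zero] at h
    exact h
  have hmean := sum_sum_smul_eq_sum_of_sum_col_eq_one (E := EuclideanSpace ℝ (Fin d))
    fun j => (Finset.sum_congr rfl fun i _ => hWsymm.apply j i).trans (hWrow j)
  have hmix := sum_norm_mix_sub_mean_sq_le (κ := Fin d) hn hWrow hW
  constructor
  · rw [hmean]
    have hsplit : ∀ i, (∑ j, W i j • (X j - η • U j)) - (n : ℝ)⁻¹ • ∑ j, (X j - η • U j)
        = ((∑ j, W i j • X j) - (n : ℝ)⁻¹ • ∑ j, X j)
          + -(η • ((∑ j, W i j • U j) - (n : ℝ)⁻¹ • ∑ j, U j)) := fun i => by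
      simp only [smul_sub, Finset.sum_sub_distrib, smul_comm (W i _) η, ← Finset.smul_sum]
      module
    have hU : ∑ i, ‖-(η • ((∑ j, W i j • U j) - (n : ℝ)⁻¹ • ∑ j, U j))‖ ^ 2
        ≤ η ^ 2 * ∑ i, ‖U i - (n : ℝ)⁻¹ • ∑ j, U j‖ ^ 2 := by
      simp only [norm_neg, norm_smul, mul_pow, Real.norm_eq_abs, sq_abs, ← Finset.mul_sum]
      refine mul_le_mul_of_nonneg_left ((hmix U).trans ?_) (sq_nonneg η)
      exact mul_le_of_le_one_left (by positivity) (by nlinarith)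
    simp only [hsplit]
    refine (sum_norm_add_sq_le_of_sum_le hρ0 hρ1 (by positivity) (hmix X) hU).trans_eq ?_
    ring
  · intro D
    rw [Finset.sum_add_distrib, hmean, smul_add]
    simp only [add_sub_add_comm]
    exact sum_norm_add_sq_le_of_sum_le hρ0 hρ1 (by positivity) (hmix U)
      (sum_norm_sub_mean_sq_le hn D)

/-- **One-step consensus contraction for D-SGT.** Matrices in `ℝ^{d×n}` are encoded by
their columns in `EuclideanSpace ℝ (Fin d)`; the squared Frobenius norm of `A − Ā` is
`∑_i ‖a_i − ā‖²`, and the spectral-norm bound `‖W − (1/n)𝟙𝟙ᵀ‖₂ ≤ ρ` is stated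
functionally.  (i) For `X⁺ := (X − ηU)W`,
`‖X⁺ − X̄⁺‖² ≤ ((1+ρ)/2)‖X − X̄‖² + η²((1+ρ²)/(1−ρ²))‖U − Ū‖²`; and
(ii) for any `D` and `U⁺ := UW + D`,
`‖U⁺ − Ū⁺‖² ≤ ((1+ρ)/2)‖U − Ū‖² + ((1+ρ²)/(1−ρ²))‖D‖²`. -/
theorem dsgt_one_step_consensus
    (d n : ℕ) (hn : 0 < n)
    (W : Matrix (Fin n) (Fin n) ℝ) (hWsymm : W.IsSymm)
    (hWrow : ∀ i, ∑ j, W i j = 1)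
    (ρ : ℝ) (hρ1 : ρ < 1)
    (hspec : ∀ a : EuclideanSpace ℝ (Fin n),
      ‖(show EuclideanSpace ℝ (Fin n) from
          WithLp.toLp 2 (fun i => (∑ j, W i j * a j) - (∑ j, a j) / n))‖ ≤ ρ * ‖a‖)
    (X U : Fin n → EuclideanSpace ℝ (Fin d)) (η : ℝ) (hη : 0 ≤ η) :
    (∑ i, ‖(∑ j, W i j • (X j - η • U j))
          - (n : ℝ)⁻¹ • ∑ k, ∑ j, W k j • (X j - η • U j)‖ ^ 2
        ≤ ((1 + ρ) / 2) * ∑ i, ‖X i - (n : ℝ)⁻¹ • ∑ j, X j‖ ^ 2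
          + η ^ 2 * ((1 + ρ ^ 2) / (1 - ρ ^ 2)) * ∑ i, ‖U i - (n : ℝ)⁻¹ • ∑ j, U j‖ ^ 2)
      ∧ ∀ D : Fin n → EuclideanSpace ℝ (Fin d),
        ∑ i, ‖((∑ j, W i j • U j) + D i)
            - (n : ℝ)⁻¹ • ∑ k, ((∑ j, W k j • U j) + D k)‖ ^ 2
          ≤ ((1 + ρ) / 2) * ∑ i, ‖U i - (n : ℝ)⁻¹ • ∑ j, U j‖ ^ 2
            + ((1 + ρ ^ 2) / (1 - ρ ^ 2)) * ∑ i, ‖D i‖ ^ 2 :=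
  dsgt_one_step_consensus_general d n hn W hWsymm hWrow ρ hρ1 hspec X U η
end

section
/- Weighted summation lemma: let (a_k)_{k≥0}, (b_k)_{k≥0} be nonnegative real sequences, let (c_k)_{k≥0} satisfy 0 ≤ c_{k+1} ≤ c_k ≤ 1 for all k, and let r ∈ (0,1). If a_{k+1} ≤ r·a_k + b_k for all k ≥ 0, then for every positive integer K, ∑_{k=0}^K c_k·a_k ≤ (1/(1−r))·( c_0·a_0 + ∑_{k=0}^K c_k·b_k ). -/
/-!
Since `c` is nonincreasing and nonnegative, weighting the recursion gives
`c_{k+1} a_{k+1} ≤ r (c_k a_k) + c_k b_k`, so `x_k = c_k a_k` satisfies a recursion of the same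
shape. Summing that recursion over `k < K` bounds `S - x_0` by `r S + ∑ c_k b_k`, where `S` is the
weighted sum, and solving for `S` gives the claim.
-/

open Finset

theorem one_sub_mul_sum_range_le_of_le_mul_add {R : Type*} [CommRing R] [LinearOrder R]
    [IsStrictOrderedRing R] {x y : ℕ → R} {r : R} (hr : 0 ≤ r) (hx : ∀ k, 0 ≤ x k)
    (hy : ∀ k, 0 ≤ y k) (hrec : ∀ k, x (k + 1) ≤ r * x k + y k) (K : ℕ) :
    (1 - r) * ∑ k ∈ range (K + 1), x k ≤ x 0 + ∑ k ∈ range (K + 1), y k := by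
  have hshift : ∑ k ∈ range K, x (k + 1) ≤ r * ∑ k ∈ range K, x k + ∑ k ∈ range K, y k := by
    rw [mul_sum, ← sum_add_distrib]
    exact sum_le_sum fun k _ => hrec k
  have hx_tail := sum_range_succ' x K
  rw [sum_range_succ x] at hx_tail ⊢
  rw [sum_range_succ y]
  nlinarith [mul_nonneg hr (hx K), hy K]

theorem mul_le_mul_add_mul_of_le_of_le_mul_add {R : Type*} [CommRing R] [LinearOrder R]
    [IsStrictOrderedRing R] {a a' b c c' r : R} (hc' : 0 ≤ c') (hcc' : c' ≤ c) (ha' : 0 ≤ a')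
    (h : a' ≤ r * a + b) : c' * a' ≤ r * (c * a) + c * b :=
  calc c' * a' ≤ c' * (r * a + b) := mul_le_mul_of_nonneg_left h hc'
    _ ≤ c * (r * a + b) := mul_le_mul_of_nonneg_right hcc' (ha'.trans h)
    _ = r * (c * a) + c * b := by ring

theorem weighted_summation_lemma_general (a b c : ℕ → ℝ) (r : ℝ)
    (ha : ∀ k, 0 ≤ a k) (hb : ∀ k, 0 ≤ b k)
    (hc_nonneg : ∀ k, 0 ≤ c (k + 1)) (hc_mono : ∀ k, c (k + 1) ≤ c k)
    (hr0 : 0 < r) (hr1 : r < 1)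
    (hrec : ∀ k, a (k + 1) ≤ r * a k + b k)
    (K : ℕ) :
    ∑ k ∈ Finset.range (K + 1), c k * a k
      ≤ (1 / (1 - r)) * (c 0 * a 0 + ∑ k ∈ Finset.range (K + 1), c k * b k) := by
  have hc : ∀ k, 0 ≤ c k
    | 0 => (hc_nonneg 0).trans (hc_mono 0)
    | k + 1 => hc_nonneg k
  have hweighted : ∀ k, c (k + 1) * a (k + 1) ≤ r * (c k * a k) + c k * b k := fun k =>
    mul_le_mul_add_mul_of_le_of_le_mul_add (hc_nonneg k) (hc_mono k) (ha (k + 1)) (hrec k)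
  rw [one_div_mul_eq_div, le_div_iff₀' (sub_pos.mpr hr1)]
  exact one_sub_mul_sum_range_le_of_le_mul_add hr0.le (fun k => mul_nonneg (hc k) (ha k))
    (fun k => mul_nonneg (hc k) (hb k)) hweighted K

/-- **Weighted summation lemma.** If `a_{k+1} ≤ r·a_k + b_k` with `a, b ≥ 0`,
`0 ≤ c_{k+1} ≤ c_k ≤ 1` and `r ∈ (0,1)`, then for every positive integer `K`,
`∑_{k=0}^K c_k a_k ≤ (1/(1−r))·(c_0 a_0 + ∑_{k=0}^K c_k b_k)`. -/
theorem weighted_summation_lemma (a b c : ℕ → ℝ) (r : ℝ)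
    (ha : ∀ k, 0 ≤ a k) (hb : ∀ k, 0 ≤ b k)
    (hc_nonneg : ∀ k, 0 ≤ c (k + 1)) (hc_mono : ∀ k, c (k + 1) ≤ c k)
    (hc_le : ∀ k, c k ≤ 1)
    (hr0 : 0 < r) (hr1 : r < 1)
    (hrec : ∀ k, a (k + 1) ≤ r * a k + b k)
    (K : ℕ) (hK : 1 ≤ K) :
    ∑ k ∈ Finset.range (K + 1), c k * a k
      ≤ (1 / (1 - r)) * (c 0 * a 0 + ∑ k ∈ Finset.range (K + 1), c k * b k) :=
  weighted_summation_lemma_general a b c r ha hb hc_nonneg hc_mono hr0 hr1 hrec K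
end

section
/- One-step descent for normalized averaged updates: let f : ℝ^d → ℝ be differentiable and L-smooth, let z_1,…,z_n ∈ ℝ^d be nonzero with average z̄ := (1/n)∑_i z_i, let x̄ ∈ ℝ^d, η ≥ 0, and set x̄⁺ := x̄ − (η/n)·∑_{i=1}^n z_i/‖z_i‖. Then f(x̄⁺) − f(x̄) ≤ −η·‖∇f(x̄)‖ + 2η·‖z̄ − ∇f(x̄)‖ + (η/n)·∑_{i=1}^n ‖z_i − z̄‖ + η²·L/2. -/
/-!
By the descent lemma, `f (x̄ - v) ≤ f x̄ - ⟪∇f x̄, v⟫ + L ‖v‖² / 2`, where `v` is `η` times an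
average of unit vectors, so `‖v‖ ≤ η` (and `L ≥ 0`, the space being nontrivial). For the linear
term, with `g = ∇f x̄`, each unit vector `uᵢ = zᵢ / ‖zᵢ‖` satisfies
`⟪g, uᵢ⟫ ≥ ‖zᵢ‖ - ‖g - zᵢ‖ ≥ ‖zᵢ‖ - ‖zᵢ - z̄‖ - ‖z̄ - g‖`, and averaging over `i` with
`(1/n) ∑ ‖zᵢ‖ ≥ ‖z̄‖ ≥ ‖g‖ - ‖z̄ - g‖` gives `(1/n) ∑ ⟪g, uᵢ⟫ ≥ ‖g‖ - 2 ‖z̄ - g‖ - (1/n) ∑ ‖zᵢ - z̄‖`.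
-/

open Finset

open scoped RealInnerProductSpace

theorem nonneg_of_norm_sub_le_mul_norm_sub {E F : Type*} [NormedAddCommGroup E]
    [NormedAddCommGroup F] {g : E → F} {L : ℝ} (hg : ∀ x y, ‖g x - g y‖ ≤ L * ‖x - y‖)
    {x y : E} (hxy : x ≠ y) : 0 ≤ L :=
  nonneg_of_mul_nonneg_left ((norm_nonneg _).trans (hg x y))
    (norm_pos_iff.mpr (sub_ne_zero.mpr hxy))

section InnerProductSpace

variable {E : Type*} [NormedAddCommGroup E] [InnerProductSpace ℝ E]

-- `‖0‖⁻¹ • 0 = 0`, so none of the lemmas on `‖z‖⁻¹ • z` need `z ≠ 0`.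
theorem norm_inv_norm_smul_le_one (z : E) : ‖‖z‖⁻¹ • z‖ ≤ 1 := by
  rcases eq_or_ne z 0 with rfl | hz
  · simp
  · exact (norm_smul_inv_norm hz).le

theorem norm_sub_norm_sub_le_inner_inv_norm_smul (z b : E) :
    ‖z‖ - ‖z - b‖ ≤ ⟪b, ‖z‖⁻¹ • z⟫ := by
  have hzz : ⟪z, ‖z‖⁻¹ • z⟫ = ‖z‖ := by
    rcases eq_or_ne z 0 with rfl | hz
    · simp
    · rw [real_inner_smul_right, real_inner_self_eq_norm_sq]
      field_simp
  have hcs : -‖z - b‖ ≤ ⟪b - z, ‖z‖⁻¹ • z⟫ := by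
    have := (abs_real_inner_le_norm (b - z) (‖z‖⁻¹ • z)).trans
      (mul_le_of_le_one_right (norm_nonneg _) (norm_inv_norm_smul_le_one z))
    exact norm_sub_rev z b ▸ neg_le_of_abs_le this
  calc ‖z‖ - ‖z - b‖ ≤ ⟪z, ‖z‖⁻¹ • z⟫ + ⟪b - z, ‖z‖⁻¹ • z⟫ := by linarith
    _ = ⟪b, ‖z‖⁻¹ • z⟫ := by rw [← inner_add_left, add_sub_cancel]

theorem norm_sum_inv_norm_smul_le_card {ι : Type*} [Fintype ι] (z : ι → E) :
    ‖∑ i, ‖z i‖⁻¹ • z i‖ ≤ (Fintype.card ι : ℝ) :=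
  calc ‖∑ i, ‖z i‖⁻¹ • z i‖ ≤ ∑ i, ‖‖z i‖⁻¹ • z i‖ := norm_sum_le _ _
    _ ≤ ∑ _i : ι, (1 : ℝ) := sum_le_sum fun i _ => norm_inv_norm_smul_le_one (z i)
    _ = Fintype.card ι := by simp

theorem card_mul_sub_sum_norm_sub_le_sum_inner {ι : Type*} [Fintype ι] (z : ι → E) (g : E) :
    (Fintype.card ι : ℝ) * (‖g‖ - 2 * ‖(Fintype.card ι : ℝ)⁻¹ • ∑ i, z i - g‖)
        - ∑ i, ‖z i - (Fintype.card ι : ℝ)⁻¹ • ∑ j, z j‖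
      ≤ ∑ i, ⟪g, ‖z i‖⁻¹ • z i⟫ := by
  set n : ℝ := (Fintype.card ι : ℝ)
  set zbar := n⁻¹ • ∑ i, z i
  have hsum : ‖∑ i, z i‖ = n * ‖zbar‖ := by
    rcases eq_or_ne n 0 with hn | hn
    · have : IsEmpty ι := Fintype.card_eq_zero_iff.mp (Nat.cast_eq_zero.mp hn)
      simp [hn]
    · rw [norm_smul, norm_inv, Real.norm_of_nonneg (Nat.cast_nonneg _), mul_inv_cancel_left₀ hn]
  have hterm : ∀ i, ‖z i‖ - ‖z i - zbar‖ - ‖zbar - g‖ ≤ ⟪g, ‖z i‖⁻¹ • z i⟫ := fun i => by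
    linarith [norm_sub_le_norm_sub_add_norm_sub (z i) zbar g,
      norm_sub_norm_sub_le_inner_inv_norm_smul (z i) g]
  have hmean : n * (‖g‖ - ‖zbar - g‖) ≤ ∑ i, ‖z i‖ :=
    calc n * (‖g‖ - ‖zbar - g‖) ≤ n * ‖zbar‖ := by
          gcongr
          linarith [norm_le_norm_add_norm_sub zbar g]
      _ = ‖∑ i, z i‖ := hsum.symm
      _ ≤ ∑ i, ‖z i‖ := norm_sum_le _ _
  have hterms := sum_le_sum fun i (_ : i ∈ univ) => hterm i
  simp only [sum_sub_distrib, sum_const, card_univ, nsmul_eq_mul] at hterms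
  linarith

variable [CompleteSpace E]

theorem hasDerivAt_comp_add_smul {f : E → ℝ} {x v : E} {t : ℝ}
    (hf : DifferentiableAt ℝ f (x + t • v)) :
    HasDerivAt (fun s : ℝ => f (x + s • v)) ⟪gradient f (x + t • v), v⟫ t := by
  have hline : HasDerivAt (fun s : ℝ => x + s • v) v t := by
    simpa using ((hasDerivAt_id t).smul_const v).const_add x
  exact (hasGradientAt_iff_hasFDerivAt.mp hf.hasGradientAt).comp_hasDerivAt t hline

theorem le_add_inner_gradient_add_mul_norm_sq {f : E → ℝ} {L : ℝ}
    (hdiff : ∀ x, DifferentiableAt ℝ f x)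
    (hsmooth : ∀ x y, ‖gradient f x - gradient f y‖ ≤ L * ‖x - y‖) (x v : E) :
    f (x + v) ≤ f x + ⟪gradient f x, v⟫ + L / 2 * ‖v‖ ^ 2 := by
  have hderiv_le : ∀ s, 0 ≤ s →
      ⟪gradient f (x + s • v), v⟫ ≤ ⟪gradient f x, v⟫ + L * ‖v‖ ^ 2 * s := by
    intro s hs
    have hcs := real_inner_le_norm (gradient f (x + s • v) - gradient f x) v
    have hlip := hsmooth (x + s • v) x
    rw [add_sub_cancel_left, norm_smul, Real.norm_of_nonneg hs] at hlip
    rw [inner_sub_left] at hcs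
    nlinarith [norm_nonneg v]
  have hB : ∀ s : ℝ, HasDerivAt (fun s => f x + s * ⟪gradient f x, v⟫ + L / 2 * ‖v‖ ^ 2 * s ^ 2)
      (⟪gradient f x, v⟫ + L * ‖v‖ ^ 2 * s) s := by
    intro s
    have := (((hasDerivAt_id s).mul_const ⟪gradient f x, v⟫).const_add (f x)).add
      ((hasDerivAt_pow 2 s).const_mul (L / 2 * ‖v‖ ^ 2))
    exact this.congr_deriv (by push_cast; ring)
  -- `s ↦ f (x + s • v)` stays below the parabola on `[0, 1]`: equal at `0`, slower growth after.
  have key := image_le_of_deriv_right_le_deriv_boundary (a := 0) (b := 1)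
    (f := fun s : ℝ => f (x + s • v))
    (fun s _ => (hasDerivAt_comp_add_smul (hdiff _)).continuousAt.continuousWithinAt)
    (fun s _ => (hasDerivAt_comp_add_smul (hdiff _)).hasDerivWithinAt)
    (by simp) (fun s _ => (hB s).continuousAt.continuousWithinAt)
    (fun s _ => (hB s).hasDerivWithinAt) (fun s hs => hderiv_le s hs.1)
    (Set.right_mem_Icc.mpr zero_le_one)
  simpa using key

end InnerProductSpace

/-- **One-step descent for normalized averaged updates.** For an `L`-smooth `f`,
nonzero `z_1,…,z_n` with average `z̄`, and `x̄⁺ := x̄ − (η/n)∑ z_i/‖z_i‖`,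
`f(x̄⁺) − f(x̄) ≤ −η‖∇f(x̄)‖ + 2η‖z̄ − ∇f(x̄)‖ + (η/n)∑‖z_i − z̄‖ + η²L/2`. -/
theorem normalized_one_step_descent
    (d n : ℕ) (hn : 0 < n)
    (f : EuclideanSpace ℝ (Fin d) → ℝ) (L : ℝ)
    (hdiff : ∀ x, DifferentiableAt ℝ f x)
    (hsmooth : ∀ x y, ‖gradient f x - gradient f y‖ ≤ L * ‖x - y‖)
    (z : Fin n → EuclideanSpace ℝ (Fin d)) (hz : ∀ i, z i ≠ 0)
    (xbar : EuclideanSpace ℝ (Fin d)) (η : ℝ) (hη : 0 ≤ η) :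
    f (xbar - (η / n) • ∑ i, ‖z i‖⁻¹ • z i) - f xbar
      ≤ -η * ‖gradient f xbar‖
        + 2 * η * ‖(n : ℝ)⁻¹ • (∑ i, z i) - gradient f xbar‖
        + (η / n) * ∑ i, ‖z i - (n : ℝ)⁻¹ • ∑ j, z j‖
        + η ^ 2 * L / 2 := by
  have hn' : (0 : ℝ) < n := Nat.cast_pos.mpr hn
  have hL : 0 ≤ L := nonneg_of_norm_sub_le_mul_norm_sub hsmooth (hz ⟨0, hn⟩)
  set v := (η / n) • ∑ i, ‖z i‖⁻¹ • z i
  have hv : ‖v‖ ≤ η := by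
    calc ‖v‖ = η / n * ‖∑ i, ‖z i‖⁻¹ • z i‖ := by
          rw [norm_smul, Real.norm_of_nonneg (by positivity)]
      _ ≤ η / n * n := by
          gcongr
          simpa using norm_sum_inv_norm_smul_le_card z
      _ = η := div_mul_cancel₀ η hn'.ne'
  have hinner : -⟪gradient f xbar, v⟫ ≤ -η * ‖gradient f xbar‖
      + 2 * η * ‖(n : ℝ)⁻¹ • (∑ i, z i) - gradient f xbar‖
      + (η / n) * ∑ i, ‖z i - (n : ℝ)⁻¹ • ∑ j, z j‖ := by
    have hsum := mul_le_mul_of_nonneg_left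
      (card_mul_sub_sum_norm_sub_le_sum_inner z (gradient f xbar)) (div_nonneg hη hn'.le)
    rw [Fintype.card_fin, mul_sub, ← mul_assoc, div_mul_cancel₀ η hn'.ne'] at hsum
    rw [real_inner_smul_right, inner_sum]
    linarith
  have hdescent := le_add_inner_gradient_add_mul_norm_sq hdiff hsmooth xbar (-v)
  rw [← sub_eq_add_neg, inner_neg_right, norm_neg] at hdescent
  have hquad : L / 2 * ‖v‖ ^ 2 ≤ η ^ 2 * L / 2 := by
    have := pow_le_pow_left₀ (norm_nonneg v) hv 2
    nlinarith
  linarith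
end

section
/- Normalization-consensus inequality: let z_1,…,z_n ∈ ℝ^d be nonzero vectors whose average z̄ := (1/n)∑_{i=1}^n z_i is also nonzero. Then ‖z̄‖ · ‖ (1/n)∑_{i=1}^n z_i/‖z_i‖ − z̄/‖z̄‖ ‖ ≤ (1/n)·∑_{i=1}^n ‖z_i − z̄‖. -/
open Finset

/-- **Normalization–consensus inequality.** For nonzero `z_1,…,z_n` with nonzero
average `z̄`, `‖z̄‖·‖(1/n)∑ z_i/‖z_i‖ − z̄/‖z̄‖‖ ≤ (1/n)∑‖z_i − z̄‖`. -/
theorem normalization_consensus_inequality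
    (d n : ℕ) (hn : 0 < n)
    (z : Fin n → EuclideanSpace ℝ (Fin d)) (hz : ∀ i, z i ≠ 0)
    (hzbar : (n : ℝ)⁻¹ • (∑ i, z i) ≠ (0 : EuclideanSpace ℝ (Fin d))) :
    ‖(n : ℝ)⁻¹ • (∑ i, z i)‖ *
        ‖(n : ℝ)⁻¹ • (∑ i, ‖z i‖⁻¹ • z i)
          - ‖(n : ℝ)⁻¹ • (∑ i, z i)‖⁻¹ • ((n : ℝ)⁻¹ • ∑ i, z i)‖
      ≤ (n : ℝ)⁻¹ * ∑ i, ‖z i - (n : ℝ)⁻¹ • ∑ j, z j‖ := by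
  set b : EuclideanSpace ℝ (Fin d) := (n : ℝ)⁻¹ • (∑ i, z i) with hb
  clear_value b
  have hbn : ‖b‖ ≠ 0 := norm_ne_zero_iff.mpr hzbar
  have key : ‖b‖ • ((n : ℝ)⁻¹ • (∑ i, ‖z i‖⁻¹ • z i) - ‖b‖⁻¹ • b)
      = (n : ℝ)⁻¹ • ∑ i, (‖b‖ * ‖z i‖⁻¹ - 1) • z i := by
    rw [smul_sub, smul_inv_smul₀ hbn]
    simp only [sub_smul, one_smul, Finset.sum_sub_distrib, smul_sub, hb,
      Finset.smul_sum, smul_smul]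
    congr 1
    exact Finset.sum_congr rfl fun i _ => by rw [mul_left_comm]
  have h1 : ‖b‖ * ‖(n : ℝ)⁻¹ • (∑ i, ‖z i‖⁻¹ • z i) - ‖b‖⁻¹ • b‖
      = ‖(n : ℝ)⁻¹ • ∑ i, (‖b‖ * ‖z i‖⁻¹ - 1) • z i‖ := by
    rw [← key, norm_smul, norm_norm]
  rw [h1, norm_smul, Real.norm_eq_abs,
    abs_of_nonneg (by positivity : (0:ℝ) ≤ (n:ℝ)⁻¹)]
  gcongr
  calc ‖∑ i, (‖b‖ * ‖z i‖⁻¹ - 1) • z i‖ ≤ ∑ i, ‖(‖b‖ * ‖z i‖⁻¹ - 1) • z i‖ :=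
        norm_sum_le _ _
    _ ≤ ∑ i, ‖z i - b‖ := by
        apply Finset.sum_le_sum
        intro i _
        have hzi : ‖z i‖ ≠ 0 := norm_ne_zero_iff.mpr (hz i)
        rw [norm_smul, Real.norm_eq_abs]
        calc |‖b‖ * ‖z i‖⁻¹ - 1| * ‖z i‖
            = |(‖b‖ * ‖z i‖⁻¹ - 1) * ‖z i‖| := by
              rw [abs_mul, abs_of_nonneg (norm_nonneg (z i))]
          _ = |‖b‖ - ‖z i‖| := by
              congr 1
              field_simp
          _ = |‖z i‖ - ‖b‖| := abs_sub_comm _ _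
          _ ≤ ‖z i - b‖ := abs_norm_sub_norm_le _ _
end

section
/- One-step consensus contraction under normalized updates: let X ∈ ℝ^{d×n}, let Ẑ ∈ ℝ^{d×n} be any matrix whose columns each have Euclidean norm at most 1, let W ∈ ℝ^{n×n} be symmetric with W𝟙 = 𝟙 and ‖W − (1/n)𝟙𝟙ᵀ‖₂ ≤ ρ < 1, and let η ≥ 0. Then for X⁺ := (X − ηẐ)W one has (1/n)·‖X⁺ − X̄⁺‖² ≤ ((1+ρ)/2)·(1/n)·‖X − X̄‖² + ((1+ρ²)/(1−ρ²))·η². -/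
/-!
Put `Y := X − ηẐ`. The mean minimises the sum of squared distances, so the consensus error
of `YW` is at most the squared distance of its columns from `Ȳ`; since `W𝟙 = 𝟙` these columns
are those of `(Y − Ȳ)W`, and the spectral bound, applied coordinatewise to the mean-zero rows
of `Y − Ȳ`, gives `ρ²‖Y − Ȳ‖²`. Young's inequality splits `Y − Ȳ = (X − X̄) − η(Ẑ − Ẑ̄)`, and
`‖Ẑ − Ẑ̄‖² ≤ ‖Ẑ‖² ≤ n`.
-/

open Finset

lemma sq_mul_add_sq_le (ρ a b : ℝ) (hρ0 : 0 ≤ ρ) (hρ1 : ρ < 1) :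
    ρ ^ 2 * (a + b) ^ 2 ≤ (1 + ρ) / 2 * a ^ 2 + (1 + ρ ^ 2) / (1 - ρ ^ 2) * b ^ 2 := by
  have hρsq : ρ ^ 2 < 1 := by nlinarith
  -- Young's inequality `(a + b)² ≤ (1 + ε) a² + (1 + 1/ε) b²` with `ε = (1 - ρ²) / (2ρ²)`
  have young : ρ ^ 2 * (a + b) ^ 2
      ≤ (1 + ρ ^ 2) / 2 * a ^ 2 + ρ ^ 2 * ((1 + ρ ^ 2) / (1 - ρ ^ 2)) * b ^ 2 := by
    have : (1 + ρ ^ 2) / 2 * a ^ 2 + ρ ^ 2 * ((1 + ρ ^ 2) / (1 - ρ ^ 2)) * b ^ 2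
        - ρ ^ 2 * (a + b) ^ 2 = ((1 - ρ ^ 2) * a - 2 * ρ ^ 2 * b) ^ 2 / (2 * (1 - ρ ^ 2)) := by
      field_simp [(sub_pos.2 hρsq).ne']
      ring
    nlinarith [div_nonneg (sq_nonneg ((1 - ρ ^ 2) * a - 2 * ρ ^ 2 * b))
      (by linarith : (0 : ℝ) ≤ 2 * (1 - ρ ^ 2))]
  calc _ ≤ _ := young
    _ ≤ _ := by
      gcongr ?_ * _ + ?_ * _
      · nlinarith
      · exact mul_le_of_le_one_left (div_nonneg (by positivity) (by linarith)) hρsq.le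

lemma sq_mul_sum_norm_sq_sub_smul_le {ι V : Type*} [Fintype ι] [SeminormedAddCommGroup V]
    [NormedSpace ℝ V] {ρ : ℝ} (hρ0 : 0 ≤ ρ) (hρ1 : ρ < 1) (η : ℝ) (x z : ι → V) :
    ρ ^ 2 * ∑ j, ‖x j - η • z j‖ ^ 2
      ≤ (1 + ρ) / 2 * ∑ j, ‖x j‖ ^ 2 + (1 + ρ ^ 2) / (1 - ρ ^ 2) * η ^ 2 * ∑ j, ‖z j‖ ^ 2 := by
  simp only [mul_sum, ← sum_add_distrib]
  gcongr with j
  calc ρ ^ 2 * ‖x j - η • z j‖ ^ 2 ≤ ρ ^ 2 * (‖x j‖ + ‖η • z j‖) ^ 2 := by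
        gcongr
        exact norm_sub_le _ _
    _ ≤ (1 + ρ) / 2 * ‖x j‖ ^ 2 + (1 + ρ ^ 2) / (1 - ρ ^ 2) * ‖η • z j‖ ^ 2 :=
        sq_mul_add_sq_le ρ _ _ hρ0 hρ1
    _ = _ := by rw [norm_smul, mul_pow, Real.norm_eq_abs, sq_abs, mul_assoc]

lemma nonneg_of_forall_norm_le_mul {V F : Type*} [NormedAddCommGroup V] [Nontrivial V]
    [SeminormedAddCommGroup F] {f : V → F} {ρ : ℝ} (h : ∀ a, ‖f a‖ ≤ ρ * ‖a‖) : 0 ≤ ρ := by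
  obtain ⟨a, ha⟩ := exists_ne (0 : V)
  exact nonneg_of_mul_nonneg_left ((norm_nonneg _).trans (h a)) (norm_pos_iff.2 ha)

lemma EuclideanSpace.sum_norm_sq_comm {ι κ : Type*} [Fintype ι] [Fintype κ]
    (Y : ι → EuclideanSpace ℝ κ) :
    ∑ i, ‖Y i‖ ^ 2 = ∑ k, ‖(WithLp.toLp 2 fun i => Y i k : EuclideanSpace ℝ ι)‖ ^ 2 := by
  simp only [EuclideanSpace.real_norm_sq_eq]
  exact sum_comm

namespace Consensus

section Mean

variable {E : Type*} [NormedAddCommGroup E] [InnerProductSpace ℝ E] {n : ℕ}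

noncomputable def mean (z : Fin n → E) : E := (n : ℝ)⁻¹ • ∑ k, z k

lemma sum_sub_mean (z : Fin n → E) : ∑ j, (z j - mean z) = 0 := by
  rcases n.eq_zero_or_pos with rfl | hn
  · simp
  · rw [sum_sub_distrib, sum_const, card_univ, Fintype.card_fin, mean,
      ← Nat.cast_smul_eq_nsmul ℝ, smul_smul, mul_inv_cancel₀ (by positivity), one_smul, sub_self]

lemma mean_sub_smul (x z : Fin n → E) (η : ℝ) :
    mean (fun j => x j - η • z j) = mean x - η • mean z := by
  simp only [mean, sum_sub_distrib, ← smul_sum, smul_sub, smul_comm η]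

lemma sum_norm_sq_sub_mean_le (z : Fin n → E) (c : E) :
    ∑ j, ‖z j - mean z‖ ^ 2 ≤ ∑ j, ‖z j - c‖ ^ 2 := by
  have split : ∀ j, z j - c = (z j - mean z) + (mean z - c) := fun j => by abel
  simp_rw [split, norm_add_sq_real, sum_add_distrib, ← mul_sum, ← sum_inner, sum_sub_mean,
    inner_zero_left, mul_zero, add_zero]
  exact le_add_of_nonneg_right (by positivity)

lemma sum_norm_sq_sub_mean_le_of_norm_le_one (z : Fin n → E) (hz : ∀ j, ‖z j‖ ≤ 1) :
    ∑ j, ‖z j - mean z‖ ^ 2 ≤ n := by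
  calc ∑ j, ‖z j - mean z‖ ^ 2 ≤ ∑ j, ‖z j - 0‖ ^ 2 := sum_norm_sq_sub_mean_le z 0
    _ ≤ ∑ _j : Fin n, 1 := by
      gcongr with j
      simpa using hz j
    _ = n := by simp

end Mean

section Mixing

variable {n : ℕ} {W : Matrix (Fin n) (Fin n) ℝ} {ρ : ℝ}
  (hspec : ∀ a : EuclideanSpace ℝ (Fin n),
      ‖(show EuclideanSpace ℝ (Fin n) from
          WithLp.toLp 2 (fun i => (∑ j, W i j * a j) - (∑ j, a j) / n))‖ ≤ ρ * ‖a‖)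
include hspec

lemma sum_norm_sq_sum_smul_le_of_sum_eq_zero {κ : Type*} [Fintype κ]
    (D : Fin n → EuclideanSpace ℝ κ) (hD : ∑ j, D j = 0) :
    ∑ i, ‖∑ j, W i j • D j‖ ^ 2 ≤ ρ ^ 2 * ∑ j, ‖D j‖ ^ 2 := by
  rw [EuclideanSpace.sum_norm_sq_comm D, EuclideanSpace.sum_norm_sq_comm, mul_sum]
  gcongr with c
  have hc : ∑ j, D j c = 0 := by simpa using congrArg (· c) hD
  have := hspec (WithLp.toLp 2 fun j => D j c)
  simp only [hc, zero_div, sub_zero] at this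
  simp only [WithLp.ofLp_sum, Finset.sum_apply, PiLp.smul_apply, smul_eq_mul]
  calc _ ≤ (ρ * _) ^ 2 := pow_le_pow_left₀ (norm_nonneg _) this 2
    _ = _ := mul_pow ..

lemma sum_norm_sq_sum_smul_sub_mean_le (hWrow : ∀ i, ∑ j, W i j = 1) {κ : Type*} [Fintype κ]
    (Y : Fin n → EuclideanSpace ℝ κ) :
    ∑ i, ‖∑ j, W i j • Y j - mean (fun i => ∑ j, W i j • Y j)‖ ^ 2
      ≤ ρ ^ 2 * ∑ j, ‖Y j - mean Y‖ ^ 2 := by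
  have hrow : ∀ i, ∑ j, W i j • Y j - mean Y = ∑ j, W i j • (Y j - mean Y) := fun i => by
    simp only [smul_sub, sum_sub_distrib, ← sum_smul, hWrow, one_smul]
  calc _ ≤ ∑ i, ‖∑ j, W i j • Y j - mean Y‖ ^ 2 := sum_norm_sq_sub_mean_le _ _
    _ = ∑ i, ‖∑ j, W i j • (Y j - mean Y)‖ ^ 2 := by simp_rw [hrow]
    _ ≤ _ := sum_norm_sq_sum_smul_le_of_sum_eq_zero hspec _ (sum_sub_mean Y)

end Mixing

end Consensus

open Consensus in
theorem normalized_one_step_consensus_general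
    (d n : ℕ) (hn : 0 < n)
    (W : Matrix (Fin n) (Fin n) ℝ)
    (hWrow : ∀ i, ∑ j, W i j = 1)
    (ρ : ℝ) (hρ1 : ρ < 1)
    (hspec : ∀ a : EuclideanSpace ℝ (Fin n),
      ‖(show EuclideanSpace ℝ (Fin n) from
          WithLp.toLp 2 (fun i => (∑ j, W i j * a j) - (∑ j, a j) / n))‖ ≤ ρ * ‖a‖)
    (X Zhat : Fin n → EuclideanSpace ℝ (Fin d)) (hZhat : ∀ i, ‖Zhat i‖ ≤ 1)
    (η : ℝ) :
    (1 / (n : ℝ)) * ∑ i, ‖(∑ j, W i j • (X j - η • Zhat j))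
        - (n : ℝ)⁻¹ • ∑ k, ∑ j, W k j • (X j - η • Zhat j)‖ ^ 2
      ≤ ((1 + ρ) / 2) * ((1 / (n : ℝ)) * ∑ i, ‖X i - (n : ℝ)⁻¹ • ∑ j, X j‖ ^ 2)
        + ((1 + ρ ^ 2) / (1 - ρ ^ 2)) * η ^ 2 := by
  have : NeZero n := ⟨hn.ne'⟩
  have hρ0 : 0 ≤ ρ := nonneg_of_forall_norm_le_mul hspec
  have hC : 0 ≤ (1 + ρ ^ 2) / (1 - ρ ^ 2) := div_nonneg (by positivity) (by nlinarith)
  set Y := fun j => X j - η • Zhat j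
  have hdev : ∀ j, Y j - mean Y = (X j - mean X) - η • (Zhat j - mean Zhat) := fun j => by
    rw [mean_sub_smul, smul_sub]
    dsimp only [Y]
    abel
  calc (1 / (n : ℝ)) * ∑ i, ‖∑ j, W i j • Y j - mean (fun i => ∑ j, W i j • Y j)‖ ^ 2
      ≤ (1 / n) * (ρ ^ 2 * ∑ j, ‖Y j - mean Y‖ ^ 2) := by
        gcongr
        exact sum_norm_sq_sum_smul_sub_mean_le hspec hWrow Y
    _ ≤ (1 / n) * ((1 + ρ) / 2 * ∑ j, ‖X j - mean X‖ ^ 2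
          + (1 + ρ ^ 2) / (1 - ρ ^ 2) * η ^ 2 * ∑ j, ‖Zhat j - mean Zhat‖ ^ 2) := by
        simp_rw [hdev]
        gcongr
        exact sq_mul_sum_norm_sq_sub_smul_le hρ0 hρ1 η _ _
    _ ≤ (1 / n) * ((1 + ρ) / 2 * ∑ j, ‖X j - mean X‖ ^ 2
          + (1 + ρ ^ 2) / (1 - ρ ^ 2) * η ^ 2 * n) := by
        gcongr
        exact sum_norm_sq_sub_mean_le_of_norm_le_one Zhat hZhat
    _ = _ := by
        unfold mean
        field_simp

/-- **One-step consensus contraction under normalized updates.** With columns of `Ẑ`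
of norm at most `1` and `X⁺ := (X − ηẐ)W`,
`(1/n)‖X⁺ − X̄⁺‖² ≤ ((1+ρ)/2)(1/n)‖X − X̄‖² + ((1+ρ²)/(1−ρ²))η²`,
squared Frobenius norms being sums of squared column deviations. -/
theorem normalized_one_step_consensus
    (d n : ℕ) (hn : 0 < n)
    (W : Matrix (Fin n) (Fin n) ℝ) (hWsymm : W.IsSymm)
    (hWrow : ∀ i, ∑ j, W i j = 1)
    (ρ : ℝ) (hρ1 : ρ < 1)
    (hspec : ∀ a : EuclideanSpace ℝ (Fin n),
      ‖(show EuclideanSpace ℝ (Fin n) from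
          WithLp.toLp 2 (fun i => (∑ j, W i j * a j) - (∑ j, a j) / n))‖ ≤ ρ * ‖a‖)
    (X Zhat : Fin n → EuclideanSpace ℝ (Fin d)) (hZhat : ∀ i, ‖Zhat i‖ ≤ 1)
    (η : ℝ) (hη : 0 ≤ η) :
    (1 / (n : ℝ)) * ∑ i, ‖(∑ j, W i j • (X j - η • Zhat j))
        - (n : ℝ)⁻¹ • ∑ k, ∑ j, W k j • (X j - η • Zhat j)‖ ^ 2
      ≤ ((1 + ρ) / 2) * ((1 / (n : ℝ)) * ∑ i, ‖X i - (n : ℝ)⁻¹ • ∑ j, X j‖ ^ 2)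
        + ((1 + ρ ^ 2) / (1 - ρ ^ 2)) * η ^ 2 :=
  normalized_one_step_consensus_general d n hn W hWrow ρ hρ1 hspec X Zhat hZhat η
end

section
/- Weighted product-sum bound: let q ∈ (0,1), p ≥ q, let a, b be integers with 2 ≤ a ≤ b, and let α > 0 satisfy α ≤ a^q (so that 1 − α·τ^{-q} ∈ [0,1] for all τ ≥ a). Then ∑_{t=a}^{b} t^{-p}·∏_{τ=a}^{t} (1 − α·τ^{-q}) ≤ ((a−1)^{q−p}/α)·exp( (α/(1−q))·(a^{1−q} − (a−1)^{1−q}) ). -/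
/-!
Put `x τ = α τ^{-q} ∈ [0, 1]`. The weights `x t ∏_{τ<t} (1 - x τ)` telescope to
`1 - ∏_τ (1 - x τ) ≤ 1`, and `t^{-p} ≤ (a - 1)^{q-p} t^{-q} = ((a - 1)^{q-p} / α) x t`,
so the sum is at most `(a - 1)^{q-p} / α`. The exponential factor is at least `1`.
-/

open Finset

theorem Finset.sum_mul_prod_one_sub_le_one {ι R : Type*} [LinearOrder ι] [CommRing R]
    [LinearOrder R] [IsStrictOrderedRing R] (s : Finset ι) (f : ι → R)
    (h0 : ∀ i ∈ s, 0 ≤ f i) (h1 : ∀ i ∈ s, f i ≤ 1) :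
    ∑ i ∈ s, f i * ∏ j ∈ s with j ≤ i, (1 - f j) ≤ 1 := by
  have hfac : ∀ j ∈ s, 0 ≤ 1 - f j := fun j hj => sub_nonneg.2 (h1 j hj)
  calc ∑ i ∈ s, f i * ∏ j ∈ s with j ≤ i, (1 - f j)
      ≤ ∑ i ∈ s, f i * ∏ j ∈ s with j < i, (1 - f j) := by
        refine sum_le_sum fun i hi => mul_le_mul_of_nonneg_left ?_ (h0 i hi)
        refine prod_le_prod_of_subset_of_le_one (monotone_filter_right s fun _ _ => le_of_lt)
          (fun j hj => hfac j (mem_filter.1 hj).1) fun j hj _ => ?_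
        exact sub_le_self _ (h0 j (mem_filter.1 hj).1)
    _ = 1 - ∏ i ∈ s, (1 - f i) := by rw [prod_one_sub_ordered]; ring
    _ ≤ 1 := sub_le_self _ (prod_nonneg hfac)

theorem Finset.Icc_filter_le_of_le_right {α : Type*} [Preorder α] [LocallyFiniteOrder α]
    [DecidableLE α] {a b c : α} (h : c ≤ b) : {j ∈ Icc a b | j ≤ c} = Icc a c := by
  ext j
  simp only [mem_filter, mem_Icc]
  exact ⟨fun ⟨⟨haj, _⟩, hjc⟩ => ⟨haj, hjc⟩, fun ⟨haj, hjc⟩ => ⟨⟨haj, hjc.trans h⟩, hjc⟩⟩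

theorem Finset.sum_Icc_mul_prod_Icc_one_sub_le_one {ι R : Type*} [LinearOrder ι]
    [LocallyFiniteOrder ι] [CommRing R] [LinearOrder R] [IsStrictOrderedRing R] (a b : ι)
    (f : ι → R) (h0 : ∀ i ∈ Icc a b, 0 ≤ f i) (h1 : ∀ i ∈ Icc a b, f i ≤ 1) :
    ∑ t ∈ Icc a b, f t * ∏ τ ∈ Icc a t, (1 - f τ) ≤ 1 := by
  calc ∑ t ∈ Icc a b, f t * ∏ τ ∈ Icc a t, (1 - f τ)
      = ∑ t ∈ Icc a b, f t * ∏ τ ∈ Icc a b with τ ≤ t, (1 - f τ) :=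
        sum_congr rfl fun t ht => by rw [Icc_filter_le_of_le_right (mem_Icc.1 ht).2]
    _ ≤ 1 := sum_mul_prod_one_sub_le_one _ f h0 h1

namespace Real

theorem mul_rpow_neg_le_one {α a τ q : ℝ} (hα : α ≤ a ^ q) (ha : 0 < a) (haτ : a ≤ τ)
    (hq : 0 ≤ q) : α * τ ^ (-q) ≤ 1 := by
  have hτ : 0 < τ := ha.trans_le haτ
  rw [rpow_neg hτ.le, ← div_eq_mul_inv]
  exact div_le_one_of_le₀ (hα.trans (rpow_le_rpow ha.le haτ hq)) (rpow_nonneg hτ.le q)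

theorem rpow_neg_le_rpow_sub_mul_rpow_neg {c t p q : ℝ} (hc : 0 < c) (hct : c ≤ t)
    (hqp : q ≤ p) : t ^ (-p) ≤ c ^ (q - p) * t ^ (-q) := by
  have ht : 0 < t := hc.trans_le hct
  calc t ^ (-p) = t ^ (q - p) * t ^ (-q) := by rw [← rpow_add ht]; ring_nf
    _ ≤ c ^ (q - p) * t ^ (-q) :=
      mul_le_mul_of_nonneg_right (rpow_le_rpow_of_nonpos hc hct (by linarith))
        (rpow_nonneg ht.le _)

end Real

theorem weighted_product_sum_bound_general (q p : ℝ) (hq0 : 0 < q) (hq1 : q < 1) (hpq : q ≤ p)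
    (a b : ℕ) (ha : 2 ≤ a)
    (α : ℝ) (hα : 0 < α) (hαa : α ≤ (a : ℝ) ^ q) :
    ∑ t ∈ Finset.Icc a b, (t : ℝ) ^ (-p) * ∏ τ ∈ Finset.Icc a t, (1 - α * (τ : ℝ) ^ (-q))
      ≤ (((a : ℝ) - 1) ^ (q - p) / α) *
          Real.exp ((α / (1 - q)) * ((a : ℝ) ^ (1 - q) - ((a : ℝ) - 1) ^ (1 - q))) := by
  have ha1 : (1 : ℝ) ≤ a - 1 := by
    have : (2 : ℝ) ≤ a := by exact_mod_cast ha
    linarith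
  have hle : ∀ t ∈ Icc a b, (a : ℝ) - 1 ≤ t := fun t ht => by
    have : (a : ℝ) ≤ t := by exact_mod_cast (mem_Icc.1 ht).1
    linarith
  set x : ℕ → ℝ := fun τ => α * (τ : ℝ) ^ (-q)
  have hx0 : ∀ τ ∈ Icc a b, 0 ≤ x τ := fun τ _ => by positivity
  have hx1 : ∀ τ ∈ Icc a b, x τ ≤ 1 := fun τ hτ =>
    Real.mul_rpow_neg_le_one hαa (by linarith) (by exact_mod_cast (mem_Icc.1 hτ).1) hq0.le
  have hP : ∀ t ∈ Icc a b, 0 ≤ ∏ τ ∈ Icc a t, (1 - x τ) := fun t ht =>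
    prod_nonneg fun τ hτ => sub_nonneg.2 <| hx1 τ <|
      Icc_subset_Icc_right (mem_Icc.1 ht).2 hτ
  set C := ((a : ℝ) - 1) ^ (q - p) / α
  have hC : 0 ≤ C := by positivity
  have hexp : 1 ≤ Real.exp ((α / (1 - q)) * ((a : ℝ) ^ (1 - q) - ((a : ℝ) - 1) ^ (1 - q))) :=
    Real.one_le_exp <| mul_nonneg (div_nonneg hα.le (by linarith)) <| sub_nonneg.2 <|
      Real.rpow_le_rpow (by linarith) (by linarith) (by linarith)
  calc ∑ t ∈ Icc a b, (t : ℝ) ^ (-p) * ∏ τ ∈ Icc a t, (1 - x τ)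
      ≤ ∑ t ∈ Icc a b, C * (x t * ∏ τ ∈ Icc a t, (1 - x τ)) := by
        refine sum_le_sum fun t ht => ?_
        have hCx : C * x t = ((a : ℝ) - 1) ^ (q - p) * (t : ℝ) ^ (-q) := by
          simp only [C, x]; field_simp
        rw [← mul_assoc, hCx]
        exact mul_le_mul_of_nonneg_right
          (Real.rpow_neg_le_rpow_sub_mul_rpow_neg (by linarith) (hle t ht) hpq) (hP t ht)
    _ = C * ∑ t ∈ Icc a b, x t * ∏ τ ∈ Icc a t, (1 - x τ) := (mul_sum _ _ _).symm
    _ ≤ C * 1 := mul_le_mul_of_nonneg_left (sum_Icc_mul_prod_Icc_one_sub_le_one a b x hx0 hx1) hC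
    _ ≤ C * _ := mul_le_mul_of_nonneg_left hexp hC

/-- **Weighted product-sum bound.** For `q ∈ (0,1)`, `p ≥ q`, integers `2 ≤ a ≤ b`
and `0 < α ≤ a^q`,
`∑_{t=a}^b t^{-p}·∏_{τ=a}^t (1 − α·τ^{-q})
  ≤ ((a−1)^{q−p}/α)·exp((α/(1−q))·(a^{1−q} − (a−1)^{1−q}))`. -/
theorem weighted_product_sum_bound (q p : ℝ) (hq0 : 0 < q) (hq1 : q < 1) (hpq : q ≤ p)
    (a b : ℕ) (ha : 2 ≤ a) (hab : a ≤ b)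
    (α : ℝ) (hα : 0 < α) (hαa : α ≤ (a : ℝ) ^ q) :
    ∑ t ∈ Finset.Icc a b, (t : ℝ) ^ (-p) * ∏ τ ∈ Finset.Icc a t, (1 - α * (τ : ℝ) ^ (-q))
      ≤ (((a : ℝ) - 1) ^ (q - p) / α) *
          Real.exp ((α / (1 - q)) * ((a : ℝ) ^ (1 - q) - ((a : ℝ) - 1) ^ (1 - q))) :=
  weighted_product_sum_bound_general q p hq0 hq1 hpq a b ha α hα hαa
end

section
/- Weighted double-sum bound for the D-NASA stepsizes: there exists an absolute constant C > 0 such that for every α ∈ (0,1), η > 0 and integer T ≥ 2, setting η_t := η·t^{-3/4} and α_t := α·t^{-1/2} for t ≥ 1, one has ∑_{t=1}^{T-1} η_t · ∑_{τ=1}^{t} ( ∏_{s=τ+1}^{t} (1 − α_s) )·η_τ ≤ C·(η²/α)·e^{2α}·(1 + log T). -/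
/-!
Exchange the order of summation, so that each `τ` carries the tail sum
`∑_{t ≥ τ} η_t ∏_{s=τ+1}^t (1 - α_s)`. Since `t^{-3/4} τ^{-3/4} ≤ t^{-1/2} τ^{-1}` for `τ ≤ t`,
this tail is at most `η² τ⁻¹ α⁻¹ ∑_{t ≥ τ} α_t ∏_{s=τ+1}^t (1 - α_s)`, and the last sum telescopes
to at most `2`. What remains is `2 (η² / α)` times a harmonic sum, which is `≤ 1 + log T`, so
the bound holds with `C = 2` even without the factor `e^{2α} ≥ 1`.
-/

open Finset Real

theorem sum_Icc_sum_Icc_comm {M : Type*} [AddCommMonoid M] (a b : ℕ) (f : ℕ → ℕ → M) :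
    ∑ t ∈ Icc a b, ∑ τ ∈ Icc a t, f t τ = ∑ τ ∈ Icc a b, ∑ t ∈ Icc τ b, f t τ :=
  sum_comm' fun t τ ↦ by simp only [mem_Icc]; omega

theorem sum_mul_prod_one_sub_add_prod_le_two {a : ℕ → ℝ} (ha : ∀ s, a s ≤ 1) {τ N : ℕ}
    (hτN : τ ≤ N) :
    ∑ t ∈ Icc τ N, a t * ∏ s ∈ Icc (τ + 1) t, (1 - a s) + ∏ s ∈ Icc (τ + 1) N, (1 - a s)
      ≤ 2 := by
  induction N, hτN using Nat.le_induction with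
  | base => simpa [add_comm, one_add_one_eq_two] using add_le_add_right (ha τ) 1
  | succ N hτN ih =>
    rw [sum_Icc_succ_top (by omega), prod_Icc_succ_top (by omega)]
    -- the new terms contribute `P (a (1 - a) + (1 - a)) = P (1 - a²) ≤ P`
    have hP : 0 ≤ ∏ s ∈ Icc (τ + 1) N, (1 - a s) :=
      prod_nonneg fun s _ ↦ sub_nonneg.mpr (ha s)
    nlinarith [mul_nonneg hP (sq_nonneg (a (N + 1)))]

theorem sum_mul_prod_one_sub_le_two {a : ℕ → ℝ} (ha : ∀ s, a s ≤ 1) (τ N : ℕ) :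
    ∑ t ∈ Icc τ N, a t * ∏ s ∈ Icc (τ + 1) t, (1 - a s) ≤ 2 := by
  rcases le_or_gt τ N with hτN | hNτ
  · have hP : 0 ≤ ∏ s ∈ Icc (τ + 1) N, (1 - a s) :=
      prod_nonneg fun s _ ↦ sub_nonneg.mpr (ha s)
    linarith [sum_mul_prod_one_sub_add_prod_le_two ha hτN]
  · simp [Icc_eq_empty_of_lt hNτ]

theorem sum_Icc_inv_le_one_add_log (n : ℕ) : ∑ i ∈ Icc 1 n, (i : ℝ)⁻¹ ≤ 1 + log n := by
  simpa [harmonic_eq_sum_Icc] using harmonic_le_one_add_log n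

theorem rpow_neg_three_quarters_mul_le {τ t : ℝ} (hτ : 0 < τ) (hτt : τ ≤ t) :
    t ^ (-(3 : ℝ) / 4) * τ ^ (-(3 : ℝ) / 4) ≤ t ^ (-(1 : ℝ) / 2) * τ⁻¹ := by
  have ht : 0 < t := hτ.trans_le hτt
  calc t ^ (-(3 : ℝ) / 4) * τ ^ (-(3 : ℝ) / 4)
      = t ^ (-(1 : ℝ) / 2) * τ ^ (-(3 : ℝ) / 4) * t ^ (-(1 : ℝ) / 4) := by
        rw [mul_right_comm, ← rpow_add ht]; norm_num
    _ ≤ t ^ (-(1 : ℝ) / 2) * τ ^ (-(3 : ℝ) / 4) * τ ^ (-(1 : ℝ) / 4) :=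
        mul_le_mul_of_nonneg_left (rpow_le_rpow_of_nonpos hτ hτt (by norm_num))
          (by positivity)
    _ = t ^ (-(1 : ℝ) / 2) * τ⁻¹ := by
        rw [mul_assoc, ← rpow_add hτ]; norm_num [rpow_neg_one]

theorem mul_rpow_neg_one_half_le_one {α : ℝ} (hα : α ≤ 1) (s : ℕ) :
    α * (s : ℝ) ^ (-(1 : ℝ) / 2) ≤ 1 := by
  rcases s.eq_zero_or_pos with rfl | hs
  · simp
  · exact mul_le_one₀ hα (rpow_nonneg s.cast_nonneg _)
      (rpow_le_one_of_one_le_of_nonpos (by exact_mod_cast hs) (by norm_num))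

theorem sum_rpow_mul_prod_one_sub_le_two_div {α : ℝ} (hα₀ : 0 < α) (hα₁ : α ≤ 1) (τ N : ℕ) :
    ∑ t ∈ Icc τ N, (t : ℝ) ^ (-(1 : ℝ) / 2) *
        ∏ s ∈ Icc (τ + 1) t, (1 - α * (s : ℝ) ^ (-(1 : ℝ) / 2)) ≤ 2 / α := by
  rw [le_div_iff₀' hα₀, mul_sum]
  simpa only [mul_assoc] using
    sum_mul_prod_one_sub_le_two (mul_rpow_neg_one_half_le_one hα₁) τ N

theorem stepsize_double_sum_le {α : ℝ} (hα₀ : 0 < α) (hα₁ : α ≤ 1) (η : ℝ) (N : ℕ) :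
    ∑ t ∈ Icc 1 N, (η * (t : ℝ) ^ (-(3 : ℝ) / 4)) *
        ∑ τ ∈ Icc 1 t, (∏ s ∈ Icc (τ + 1) t, (1 - α * (s : ℝ) ^ (-(1 : ℝ) / 2))) *
          (η * (τ : ℝ) ^ (-(3 : ℝ) / 4))
      ≤ 2 * (η ^ 2 / α) * ∑ τ ∈ Icc 1 N, (τ : ℝ)⁻¹ := by
  set P : ℕ → ℕ → ℝ := fun τ t ↦ ∏ s ∈ Icc (τ + 1) t, (1 - α * (s : ℝ) ^ (-(1 : ℝ) / 2))
  have hP (τ t : ℕ) : 0 ≤ P τ t :=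
    prod_nonneg fun s _ ↦ sub_nonneg.mpr (mul_rpow_neg_one_half_le_one hα₁ s)
  calc _ = ∑ τ ∈ Icc 1 N, ∑ t ∈ Icc τ N,
        η ^ 2 * (P τ t * ((t : ℝ) ^ (-(3 : ℝ) / 4) * (τ : ℝ) ^ (-(3 : ℝ) / 4))) := by
        simp_rw [mul_sum]
        rw [sum_Icc_sum_Icc_comm]
        exact sum_congr rfl fun _ _ ↦ sum_congr rfl fun _ _ ↦ by ring
    _ ≤ ∑ τ ∈ Icc 1 N, ∑ t ∈ Icc τ N,
        η ^ 2 * (P τ t * ((t : ℝ) ^ (-(1 : ℝ) / 2) * (τ : ℝ)⁻¹)) := by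
        gcongr ∑ τ ∈ _, ∑ t ∈ _, _ * (_ * ?_) with τ hτ t ht
        · exact hP τ t
        · exact rpow_neg_three_quarters_mul_le (Nat.cast_pos.mpr (mem_Icc.mp hτ).1)
            (Nat.cast_le.mpr (mem_Icc.mp ht).1)
    _ = ∑ τ ∈ Icc 1 N, η ^ 2 * (τ : ℝ)⁻¹ * ∑ t ∈ Icc τ N, (t : ℝ) ^ (-(1 : ℝ) / 2) * P τ t := by
        simp_rw [mul_sum]
        exact sum_congr rfl fun _ _ ↦ sum_congr rfl fun _ _ ↦ by ring
    _ ≤ ∑ τ ∈ Icc 1 N, η ^ 2 * (τ : ℝ)⁻¹ * (2 / α) := by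
        gcongr with τ
        exact sum_rpow_mul_prod_one_sub_le_two_div hα₀ hα₁ τ N
    _ = 2 * (η ^ 2 / α) * ∑ τ ∈ Icc 1 N, (τ : ℝ)⁻¹ := by
        rw [mul_sum]
        exact sum_congr rfl fun _ _ ↦ by ring

/-- **Weighted double-sum bound for the D-NASA stepsizes.** There is an absolute
constant `C > 0` such that for `α ∈ (0,1)`, `η > 0`, `T ≥ 2`, with `η_t = η·t^{-3/4}`
and `α_t = α·t^{-1/2}`,
`∑_{t=1}^{T-1} η_t ∑_{τ=1}^t (∏_{s=τ+1}^t (1−α_s))·η_τ ≤ C·(η²/α)·e^{2α}·(1 + log T)`. -/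
theorem dnasa_stepsize_double_sum_bound :
    ∃ C : ℝ, 0 < C ∧
      ∀ (α η : ℝ) (T : ℕ), 0 < α → α < 1 → 0 < η → 2 ≤ T →
      ∑ t ∈ Finset.Icc 1 (T - 1), (η * (t : ℝ) ^ (-(3 : ℝ) / 4)) *
          ∑ τ ∈ Finset.Icc 1 t,
            (∏ s ∈ Finset.Icc (τ + 1) t, (1 - α * (s : ℝ) ^ (-(1 : ℝ) / 2))) *
              (η * (τ : ℝ) ^ (-(3 : ℝ) / 4))
        ≤ C * (η ^ 2 / α) * Real.exp (2 * α) * (1 + Real.log T) := by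
  refine ⟨2, two_pos, fun α η T hα₀ hα₁ _ hT ↦ ?_⟩
  have hlog : log (T - 1 : ℕ) ≤ log T := log_le_log (by norm_cast; omega) (by norm_cast; omega)
  have hlog₀ : 0 ≤ 1 + log T := by linarith [log_nonneg (by norm_cast; omega : (1 : ℝ) ≤ T)]
  calc _ ≤ 2 * (η ^ 2 / α) * ∑ τ ∈ Icc 1 (T - 1), (τ : ℝ)⁻¹ :=
        stepsize_double_sum_le hα₀ hα₁.le η (T - 1)
    _ ≤ 2 * (η ^ 2 / α) * (1 + log T) := by
        gcongr
        linarith [sum_Icc_inv_le_one_add_log (T - 1)]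
    _ ≤ 2 * (η ^ 2 / α) * exp (2 * α) * (1 + log T) :=
        mul_le_mul_of_nonneg_right
          (le_mul_of_one_le_right (by positivity) (one_le_exp (by positivity))) hlog₀
end
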